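/- arXiv:0704.2250 — 7 statements merged into one kernel-verified Lean document; each statement's English description precedes it below -/
import Mathlib

section
/- Let J be the set of Laurent polynomials f ∈ Z[x^{±1}, y_1^{±1}, …, y_n^{±1}] invariant under the group W generated by all permutations of the y_j and all sign inversions y_j ↦ y_j^{-1}, such that x·∂f/∂x + y_j·∂f/∂y_j lies in the ideal generated by (y_j − x) for each j = 1,…,n. Set u = x + x^{-1} and v_j = y_j + y_j^{-1}. Then J decomposes as a direct sum J = J⁺ ⊕ J⁻, where J⁻ = { x·∏_{j=1}^n (u − v_j)·g : g ∈ Z[u, v_1, …, v_n]^{S_n} } and J⁺ = { f ∈ Z[u, v_1, …, v_n]^{S_n} : u·∂f/∂u + v_j·∂f/∂v_j ∈ (u − v_j) for all j }. -/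
namespace Stmt2

variable (n : ℕ)

/-- the Laurent polynomial ring `ℤ[x^{±1}, y₁^{±1}, …, y_n^{±1}]`. -/
abbrev A (n : ℕ) := AddMonoidAlgebra ℤ (ℤ × (Fin n → ℤ))

noncomputable def X : A n := AddMonoidAlgebra.single (1, 0) 1
noncomputable def Y (j : Fin n) : A n := AddMonoidAlgebra.single (0, Pi.single j 1) 1
/-- `u = x + x⁻¹`. -/
noncomputable def u : A n :=
  AddMonoidAlgebra.single (1, 0) 1 + AddMonoidAlgebra.single (-1, 0) 1
/-- `v_j = y_j + y_j⁻¹`. -/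
noncomputable def v (j : Fin n) : A n :=
  AddMonoidAlgebra.single (0, Pi.single j 1) 1 + AddMonoidAlgebra.single (0, -Pi.single j 1) 1

/-- permutation of the `y` variables on exponents. -/
def permE (σ : Equiv.Perm (Fin n)) : (ℤ × (Fin n → ℤ)) ≃ (ℤ × (Fin n → ℤ)) :=
  Equiv.prodCongr (Equiv.refl ℤ) (Equiv.arrowCongr σ (Equiv.refl ℤ))

/-- inversion `y_j ↦ y_j⁻¹` on exponents. -/
def flipE (j : Fin n) : (ℤ × (Fin n → ℤ)) ≃ (ℤ × (Fin n → ℤ)) :=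
  Function.Involutive.toPerm (fun m => (m.1, Function.update m.2 j (-(m.2 j))))
    (by
      intro m
      refine Prod.ext rfl ?_
      funext i
      by_cases h : i = j
      · subst h; simp
      · simp [Function.update_of_ne h])

/-- the Euler operator `x∂/∂x + y_j∂/∂y_j`. -/
noncomputable def D (j : Fin n) (f : A n) : A n :=
  Finsupp.sum f.coeff fun m c => AddMonoidAlgebra.single m ((m.1 + m.2 j) * c)

/-- membership in the ring `ℤ[u, v₁, …, v_n]^{S_n}` together with a witnessing
symmetric polynomial. -/
def IsSym (p : MvPolynomial (Option (Fin n)) ℤ) : Prop :=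
  ∀ σ : Equiv.Perm (Fin n), MvPolynomial.rename (Option.map σ) p = p

/-- the ring `J = J(C(n))`. -/
def J : Set (A n) :=
  {f | (∀ σ : Equiv.Perm (Fin n), Finsupp.equivMapDomain (permE n σ) f.coeff = f.coeff) ∧
       (∀ j : Fin n, Finsupp.equivMapDomain (flipE n j) f.coeff = f.coeff) ∧
       (∀ j : Fin n, D n j f ∈ Ideal.span {Y n j - X n})}

/-- `J⁻ = x·∏_j (u − v_j)·ℤ[u,v]^{S_n}`. -/
noncomputable def Jminus : Set (A n) :=
  {f | ∃ p : MvPolynomial (Option (Fin n)) ℤ, IsSym n p ∧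
        f = X n * (∏ j : Fin n, (u n - v n j)) *
          MvPolynomial.aeval (fun o : Option (Fin n) => o.elim (u n) (v n)) p}

/-- `J⁺ = {f ∈ ℤ[u,v]^{S_n} : u∂f/∂u + v_j∂f/∂v_j ∈ (u − v_j) for all j}`. -/
noncomputable def Jplus : Set (A n) :=
  {f | ∃ p : MvPolynomial (Option (Fin n)) ℤ, IsSym n p ∧
        f = MvPolynomial.aeval (fun o : Option (Fin n) => o.elim (u n) (v n)) p ∧
        ∀ j : Fin n,
          MvPolynomial.X none * MvPolynomial.pderiv none p +
            MvPolynomial.X (some j) * MvPolynomial.pderiv (some j) p ∈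
          Ideal.span {(MvPolynomial.X none - MvPolynomial.X (some j) :
            MvPolynomial (Option (Fin n)) ℤ)}}

end Stmt2

/-!
Invariance under the inversions `y_j ↦ y_j⁻¹` puts `f` in the subring generated by `x^{±1}` and
the `v_j`; since `x⁻¹ = u - x`, this gives `f = P(u, v) + x Q(u, v)`. The pair `(P, Q)` is unique:
`u, v₁, …, v_n` are algebraically independent (distinct monomials in them have distinct top
exponents for the product order), and applying `x ↦ x⁻¹`, which fixes `u` and the `v_j`, to
`P + x Q = 0` gives `(x - x⁻¹) Q = 0`. Hence `f` is `S_n`-invariant iff `P` and `Q` are. The Euler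
condition is read off after the substitution `y_j ↦ x`, whose kernel is `(y_j - x)`: it says that
`P(u, v)|_{v_j = u}` does not depend on `u`, which is the condition defining `J⁺`, and that
`R = Q(u, v)|_{v_j = u}` solves `(u² - 4) ∂_u R + u R = 0`, which forces `R = 0`. Hence
`∏_j (u - v_j)` divides `Q`, and `x Q(u, v)` is the `J⁻` part.
-/

theorem Units.val_sub_one_dvd_zpow_sub_one {R : Type*} [CommRing R] (a : Rˣ) (k : ℤ) :
    (a : R) - 1 ∣ ((a ^ k : Rˣ) : R) - 1 := by
  obtain ⟨N, rfl | rfl⟩ := Int.eq_nat_or_neg k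
  · simpa using sub_one_dvd_pow_sub_one (a : R) N
  · have h : ((a ^ (-(N : ℤ)) : Rˣ) : R) - 1 = -((a⁻¹ ^ N : Rˣ) : R) * ((a : R) ^ N - 1) := by
      rw [zpow_neg, zpow_natCast, inv_pow]
      have := (a ^ N).inv_mul
      push_cast at this ⊢
      linear_combination this
    rw [h]
    exact Dvd.dvd.mul_left (sub_one_dvd_pow_sub_one (a : R) N) _

theorem Function.update_pi_single_neg {ι G : Type*} [DecidableEq ι] [AddGroup G] (i j : ι)
    (c : G) :
    Function.update (Pi.single i c : ι → G) j (-(Pi.single i c : ι → G) j) =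
      Pi.single i (if i = j then -c else c) := by
  ext k
  rcases eq_or_ne k j with rfl | hk
  · split_ifs with h <;> simp [h]
  · rcases eq_or_ne i j with rfl | hij
    · simp [hk]
    · simp [hk, hij]

theorem Function.update_pi_single_zero {ι G : Type*} [DecidableEq ι] [AddGroup G] (i j : ι)
    (c : G) :
    Function.update (Pi.single i c : ι → G) j 0 = if i = j then 0 else Pi.single i c := by
  ext k
  rcases eq_or_ne k j with rfl | hk
  · split_ifs with h <;> simp [*]
  · split_ifs with h
    · simp [h, hk]
    · simp [hk]

namespace AddMonoidAlgebra

section TopMonic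

variable {R M : Type*} [CommSemiring R] [AddCommMonoid M] [PartialOrder M]

def IsTopMonic (s : M) (f : AddMonoidAlgebra R M) : Prop :=
  (∀ m ∈ f.coeff.support, m ≤ s) ∧ f.coeff s = 1

theorem isTopMonic_one : IsTopMonic (0 : M) (1 : AddMonoidAlgebra R M) := by
  classical
  refine ⟨fun m hm => (Finset.mem_singleton.mp (support_coeff_one_subset hm)).le, ?_⟩
  rw [one_def, coeff_single, Finsupp.single_eq_same]

theorem isTopMonic_single_add_single [Nontrivial R] {a b : M} (hba : b < a) :
    IsTopMonic a (single a (1 : R) + single b 1) := by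
  classical
  refine ⟨fun m hm => ?_, ?_⟩
  · rw [coeff_add, coeff_single, coeff_single] at hm
    rcases Finset.mem_union.mp (Finsupp.support_add hm) with h | h
    · exact (Finset.mem_singleton.mp (Finsupp.support_single_subset h)).le
    · exact (Finset.mem_singleton.mp (Finsupp.support_single_subset h)).le.trans hba.le
  · rw [coeff_add, coeff_single, coeff_single, Finsupp.add_apply, Finsupp.single_eq_same,
      Finsupp.single_eq_of_ne hba.ne', add_zero]

variable [IsOrderedCancelAddMonoid M]

theorem IsTopMonic.mul {s t : M} {f g : AddMonoidAlgebra R M} (hf : IsTopMonic s f)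
    (hg : IsTopMonic t g) : IsTopMonic (s + t) (f * g) := by
  classical
  refine ⟨fun m hm => ?_, ?_⟩
  · obtain ⟨a, ha, b, hb, rfl⟩ := Finset.mem_add.mp (support_coeff_mul_subset f g hm)
    exact add_le_add (hf.1 a ha) (hg.1 b hb)
  · rw [coeff_mul_add_of_uniqueAdd, hf.2, hg.2, one_mul]
    intro a b ha hb hab
    exact (add_eq_add_iff_eq_and_eq (hf.1 a ha) (hg.1 b hb)).mp hab

theorem IsTopMonic.pow {s : M} {f : AddMonoidAlgebra R M} (hf : IsTopMonic s f) (k : ℕ) :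
    IsTopMonic (k • s) (f ^ k) := by
  induction k with
  | zero => simpa using isTopMonic_one
  | succ k ih => simpa [pow_succ, succ_nsmul] using ih.mul hf

end TopMonic

section DomCongr

variable {R M : Type*} [CommSemiring R] [AddMonoid M]

theorem equivMapDomain_coeff_eq_self_iff (e : M ≃+ M) (f : AddMonoidAlgebra R M) :
    Finsupp.equivMapDomain e.toEquiv f.coeff = f.coeff ↔ domCongr R R e f = f := by
  have : Finsupp.equivMapDomain e.toEquiv f.coeff = (domCongr R R e f).coeff := by ext; simp
  rw [this, coeff_inj]

theorem coeff_apply_of_domCongr_eq {e : M ≃+ M} {f : AddMonoidAlgebra R M}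
    (hf : domCongr R R e f = f) (m : M) : f.coeff (e m) = f.coeff m := by
  conv_lhs => rw [← hf]
  simp

end DomCongr

theorem single_sub_one_dvd_single_zsmul_sub_one {R G : Type*} [CommRing R] [AddCommGroup G]
    (g : G) (k : ℤ) : single g (1 : R) - 1 ∣ single (k • g) (1 : R) - 1 := by
  have hw (k : ℤ) : (((of R G).toHomUnits (Multiplicative.ofAdd g) ^ k :
      (AddMonoidAlgebra R G)ˣ) : AddMonoidAlgebra R G) = single (k • g) 1 := by
    rw [← map_zpow, MonoidHom.coe_toHomUnits, ← ofAdd_zsmul, of_apply]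
    rfl
  simpa [hw] using
    Units.val_sub_one_dvd_zpow_sub_one ((of R G).toHomUnits (Multiplicative.ofAdd g)) k

end AddMonoidAlgebra

open Polynomial in
theorem Polynomial.eq_zero_of_sq_sub_C_mul_derivative_add_X_mul {R : Type*} [CommRing R]
    [IsDomain R] [CharZero R] (c : R) {g : R[X]}
    (h : (X ^ 2 - C c) * derivative g + X * g = 0) : g = 0 := by
  by_contra hg
  -- the coefficient of `X ^ (natDegree g + 1)` is `(natDegree g + 1) * leadingCoeff g`
  have hcoeff := congrArg (fun q => q.coeff (g.natDegree + 1)) h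
  simp only [coeff_add, sub_mul, coeff_sub, coeff_C_mul, coeff_X_mul, coeff_zero] at hcoeff
  rw [coeff_X_pow_mul', coeff_derivative, coeff_derivative,
    coeff_eq_zero_of_natDegree_lt (show g.natDegree < g.natDegree + 1 + 1 by omega)] at hcoeff
  have key : ((g.natDegree : R) + 1) * g.leadingCoeff = 0 := by
    rcases Nat.eq_zero_or_pos g.natDegree with h0 | hpos
    · simpa [leadingCoeff, h0] using hcoeff
    · rw [if_pos (by omega), show g.natDegree + 1 - 2 + 1 = g.natDegree by omega,
        Nat.cast_sub (by omega)] at hcoeff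
      push_cast at hcoeff
      rw [leadingCoeff]
      linear_combination hcoeff
  rcases mul_eq_zero.mp key with h1 | h1
  · exact_mod_cast Nat.cast_add_one_ne_zero g.natDegree h1
  · exact hg (leadingCoeff_eq_zero.mp h1)

theorem Derivation.map_mvPolynomial_aeval {R B σ : Type*} [CommRing R] [CommRing B]
    [Algebra R B] [Fintype σ] (D : Derivation R B B) (g : σ → B) (p : MvPolynomial σ R) :
    D (MvPolynomial.aeval g p) =
      ∑ i, MvPolynomial.aeval g (MvPolynomial.pderiv i p) * D (g i) := by
  classical
  induction p using MvPolynomial.induction_on with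
  | C a => simp
  | add p q hp hq => simp [hp, hq, add_mul, Finset.sum_add_distrib]
  | mul_X p i hp =>
    simp [hp, MvPolynomial.pderiv_X, Pi.single_apply, add_mul, Finset.sum_add_distrib,
      apply_ite (MvPolynomial.aeval g), ite_mul, Finset.mul_sum, mul_assoc]

namespace MvPolynomial

theorem optionEquivLeft_pderiv_none {R σ : Type*} [CommRing R]
    (p : MvPolynomial (Option σ) R) :
    optionEquivLeft R σ (pderiv none p) = Polynomial.derivative (optionEquivLeft R σ p) := by
  induction p using MvPolynomial.induction_on with
  | C a => simp [optionEquivLeft_C]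
  | add p q hp hq => simp [hp, hq]
  | mul_X p o hp =>
    rcases o with _ | i
    · simp [hp, optionEquivLeft_X_none, Polynomial.derivative_mul]
      ring
    · simp [hp, optionEquivLeft_X_some, Polynomial.derivative_mul, mul_comm]

theorem pderiv_rename_eq_sum {R σ τ : Type*} [CommRing R] [Fintype σ] [DecidableEq τ]
    (f : σ → τ) (i : τ) (p : MvPolynomial σ R) :
    pderiv i (rename f p) = ∑ s with f s = i, rename f (pderiv s p) := by
  rw [rename_eq_aeval, (pderiv i).map_mvPolynomial_aeval, Finset.sum_filter]
  simp [pderiv_X, Pi.single_apply, eq_comm]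

theorem sub_mem_of_forall_X_sub_mem {R σ : Type*} [CommRing R]
    (φ : MvPolynomial σ R →ₐ[R] MvPolynomial σ R) {I : Ideal (MvPolynomial σ R)}
    (h : ∀ i, X i - φ (X i) ∈ I) (p : MvPolynomial σ R) : p - φ p ∈ I := by
  have : (Ideal.Quotient.mkₐ R I).comp φ = Ideal.Quotient.mkₐ R I :=
    algHom_ext fun i => (Ideal.Quotient.eq.mpr (h i)).symm
  exact Ideal.Quotient.eq.mp (DFunLike.congr_fun this p).symm

end MvPolynomial

namespace Stmt2

open AddMonoidAlgebra
open MvPolynomial (pderiv rename)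

variable {n : ℕ}

abbrev Exp (n : ℕ) := ℤ × (Fin n → ℤ)

abbrev UVPoly (n : ℕ) := MvPolynomial (Option (Fin n)) ℤ

noncomputable abbrev evalUV : UVPoly n →ₐ[ℤ] A n :=
  MvPolynomial.aeval fun o => o.elim (u n) (v n)

@[simp] theorem evalUV_X_none : evalUV (MvPolynomial.X none) = u n := by simp

@[simp] theorem evalUV_X_some (i : Fin n) : evalUV (MvPolynomial.X (some i)) = v n i := by simp

noncomputable def Xinv : A n := single (-1, 0) 1

theorem u_eq : u n = X n + Xinv := rfl

theorem X_mul_Xinv : X n * Xinv = 1 := by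
  rw [X, Xinv, single_mul_single, one_mul, one_def]
  congr 1

theorem X_mul_X : X n * X n = u n * X n - 1 := by
  rw [u_eq, add_mul, mul_comm Xinv, X_mul_Xinv]
  ring

section Automorphisms

def permExp (σ : Equiv.Perm (Fin n)) : Exp n ≃+ Exp n :=
  { permE n σ with map_add' := fun _ _ => rfl }

def flipExp (j : Fin n) : Exp n ≃+ Exp n :=
  { flipE n j with
    map_add' := fun a b => by
      ext i
      · rfl
      · show Function.update (a.2 + b.2) j (-(a.2 j + b.2 j)) i =
          Function.update a.2 j (-a.2 j) i + Function.update b.2 j (-b.2 j) i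
        rcases eq_or_ne i j with rfl | h
        · simp [add_comm]
        · simp [h] }

def invXExp : Exp n ≃+ Exp n := (AddEquiv.neg ℤ).prodCongr (AddEquiv.refl _)

@[simp] theorem permExp_apply (σ : Equiv.Perm (Fin n)) (m : Exp n) :
    permExp σ m = (m.1, m.2 ∘ σ.symm) := rfl

@[simp] theorem flipExp_apply (j : Fin n) (m : Exp n) :
    flipExp j m = (m.1, Function.update m.2 j (-m.2 j)) := rfl

@[simp] theorem invXExp_apply (m : Exp n) : invXExp m = (-m.1, m.2) := rfl

theorem domCongr_evalUV (e : Exp n ≃+ Exp n) (ψ : UVPoly n →ₐ[ℤ] UVPoly n)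
    (h : ∀ o, domCongr ℤ ℤ e (evalUV (MvPolynomial.X o)) = evalUV (ψ (MvPolynomial.X o)))
    (p : UVPoly n) : domCongr ℤ ℤ e (evalUV p) = evalUV (ψ p) := by
  have : (domCongr ℤ ℤ e).toAlgHom.comp evalUV = evalUV.comp ψ := MvPolynomial.algHom_ext h
  exact DFunLike.congr_fun this p

theorem domCongr_permExp_evalUV (σ : Equiv.Perm (Fin n)) (p : UVPoly n) :
    domCongr ℤ ℤ (permExp σ) (evalUV p) = evalUV (rename (Option.map σ) p) := by
  refine domCongr_evalUV _ _ (fun o => ?_) p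
  rcases o with _ | i
  · simp [u]
  · simp [v, ← Pi.single_neg, Pi.single_comp_equiv]

theorem domCongr_flipExp_evalUV (j : Fin n) (p : UVPoly n) :
    domCongr ℤ ℤ (flipExp j) (evalUV p) = evalUV p := by
  refine domCongr_evalUV _ (AlgHom.id ℤ _) (fun o => ?_) p
  rcases o with _ | i
  · simp [u]
  · simp only [AlgHom.id_apply, evalUV_X_some, v, map_add, domCongr_single, flipExp_apply,
      ← Pi.single_neg, Function.update_pi_single_neg]
    split_ifs <;> simp [add_comm]

theorem domCongr_invXExp_evalUV (p : UVPoly n) :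
    domCongr ℤ ℤ invXExp (evalUV p) = evalUV p := by
  refine domCongr_evalUV _ (AlgHom.id ℤ _) (fun o => ?_) p
  rcases o with _ | i
  · simp [u, add_comm]
  · simp [v]

theorem domCongr_invXExp_X : domCongr ℤ ℤ invXExp (X n) = Xinv := by simp [X, Xinv]

end Automorphisms

section Injectivity

def topExp : (Option (Fin n) →₀ ℕ) →+ Exp n where
  toFun μ := ((μ none : ℤ), fun i => (μ (some i) : ℤ))
  map_zero' := by ext <;> simp
  map_add' μ ν := by ext <;> simp

theorem topExp_le_topExp_iff {μ ν : Option (Fin n) →₀ ℕ} : topExp μ ≤ topExp ν ↔ μ ≤ ν := by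
  simp only [topExp, AddMonoidHom.coe_mk, ZeroHom.coe_mk, Prod.mk_le_mk, Pi.le_def,
    Nat.cast_le, Finsupp.le_def, Option.forall]

theorem isTopMonic_evalUV_X (o : Option (Fin n)) :
    IsTopMonic (topExp (Finsupp.single o 1)) (evalUV (MvPolynomial.X o)) := by
  rcases o with _ | i
  · have : topExp (Finsupp.single none 1) = ((1 : ℤ), (0 : Fin n → ℤ)) := by
      ext <;> simp [topExp]
    rw [this, evalUV_X_none, u]
    exact isTopMonic_single_add_single (by simp)
  · have : topExp (Finsupp.single (some i) 1) = ((0 : ℤ), (Pi.single i 1 : Fin n → ℤ)) := by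
      ext k <;> simp [topExp, Finsupp.single_apply, Pi.single_apply, eq_comm]
    rw [this, evalUV_X_some, v]
    refine isTopMonic_single_add_single (Prod.mk_lt_mk_of_le_of_lt le_rfl ?_)
    refine Pi.lt_def.mpr ⟨fun k => ?_, i, by simp⟩
    rcases eq_or_ne k i with rfl | hk <;> simp [*]

theorem isTopMonic_evalUV_monomial (μ : Option (Fin n) →₀ ℕ) :
    IsTopMonic (topExp μ) (evalUV (MvPolynomial.monomial μ 1)) := by
  induction μ using Finsupp.induction with
  | zero => simpa using isTopMonic_one
  | single_add o k μ _ _ ih =>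
    rw [MvPolynomial.monomial_single_add, map_mul, map_pow, map_add,
      ← Finsupp.smul_single_one, map_nsmul]
    exact ((isTopMonic_evalUV_X o).pow k).mul ih

theorem evalUV_injective : Function.Injective (evalUV (n := n)) := by
  rw [injective_iff_map_eq_zero]
  intro p hp
  by_contra hne
  obtain ⟨μ₀, hμ₀, hmax⟩ := p.support.exists_maximal (MvPolynomial.support_nonempty.mpr hne)
  have evalUV_monomial (μ : Option (Fin n) →₀ ℕ) (c : ℤ) :
      evalUV (MvPolynomial.monomial μ c) = c • evalUV (MvPolynomial.monomial μ 1) := by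
    rw [← map_zsmul, MvPolynomial.smul_monomial, smul_eq_mul, mul_one]
  have key : (evalUV p).coeff (topExp μ₀) = p.coeff μ₀ := by
    conv_lhs => rw [p.as_sum]
    rw [map_sum, coeff_sum, Finset.sum_apply', Finset.sum_eq_single μ₀]
    · rw [evalUV_monomial, coeff_smul_apply, (isTopMonic_evalUV_monomial μ₀).2, smul_eq_mul,
        mul_one]
    · intro μ hμ hne
      rw [evalUV_monomial, coeff_smul_apply, smul_eq_mul]
      by_contra h
      have hle := topExp_le_topExp_iff.mp <| (isTopMonic_evalUV_monomial μ).1 _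
        (Finsupp.mem_support_iff.mpr (right_ne_zero_of_mul h))
      exact hne (le_antisymm (hmax hμ hle) hle)
    · exact fun h => absurd hμ₀ h
  rw [hp, coeff_zero, Finsupp.zero_apply] at key
  exact MvPolynomial.mem_support_iff.mp hμ₀ key.symm

theorem X_sub_Xinv_ne_zero : X n - Xinv ≠ 0 := by
  intro h
  have := congrArg (fun f : A n => f.coeff (1, 0)) h
  simp [X, Xinv, coeff_single] at this

theorem evalUV_add_X_mul_evalUV_eq_zero_iff {P Q : UVPoly n} :
    evalUV P + X n * evalUV Q = 0 ↔ P = 0 ∧ Q = 0 := by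
  refine ⟨fun h => ?_, by rintro ⟨rfl, rfl⟩; simp⟩
  have h' := congrArg (domCongr ℤ ℤ invXExp) h
  rw [map_add, map_mul, domCongr_invXExp_evalUV, domCongr_invXExp_evalUV, domCongr_invXExp_X,
    map_zero] at h'
  have hQ : evalUV Q = 0 :=
    (mul_eq_zero.mp (by linear_combination h - h' : (X n - Xinv) * evalUV Q = 0)).resolve_left
      X_sub_Xinv_ne_zero
  rw [hQ, mul_zero, add_zero] at h
  exact ⟨(map_eq_zero_iff _ evalUV_injective).mp h, (map_eq_zero_iff _ evalUV_injective).mp hQ⟩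

theorem evalUV_add_X_mul_evalUV_inj {P Q P' Q' : UVPoly n} :
    evalUV P + X n * evalUV Q = evalUV P' + X n * evalUV Q' ↔ P = P' ∧ Q = Q' := by
  rw [← sub_eq_zero, ← sub_eq_zero (a := P), ← sub_eq_zero (a := Q),
    ← evalUV_add_X_mul_evalUV_eq_zero_iff, map_sub, map_sub]
  constructor <;> intro h <;> linear_combination h

end Injectivity

section FlipInvariants

def uvxSubalgebra : Subalgebra ℤ (A n) where
  carrier := {f | ∃ P Q : UVPoly n, f = evalUV P + X n * evalUV Q}
  mul_mem' := by
    rintro _ _ ⟨P, Q, rfl⟩ ⟨P', Q', rfl⟩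
    refine ⟨P * P' - Q * Q', P * Q' + Q * P' + MvPolynomial.X none * Q * Q', ?_⟩
    simp only [map_sub, map_add, map_mul, evalUV_X_none]
    linear_combination evalUV Q * evalUV Q' * X_mul_X
  add_mem' := by
    rintro _ _ ⟨P, Q, rfl⟩ ⟨P', Q', rfl⟩
    exact ⟨P + P', Q + Q', by simp only [map_add]; ring⟩
  algebraMap_mem' c := ⟨MvPolynomial.C c, 0, by simp⟩

theorem evalUV_mem_uvxSubalgebra (P : UVPoly n) : evalUV P ∈ uvxSubalgebra := ⟨P, 0, by simp⟩

theorem X_mem_uvxSubalgebra : X n ∈ uvxSubalgebra := ⟨0, 1, by simp⟩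

theorem Xinv_mem_uvxSubalgebra : (Xinv : A n) ∈ uvxSubalgebra := by
  have : (Xinv : A n) = u n - X n := by rw [u_eq]; ring
  rw [this, ← evalUV_X_none]
  exact sub_mem (evalUV_mem_uvxSubalgebra _) X_mem_uvxSubalgebra

theorem single_fst_mem_uvxSubalgebra (a : ℤ) : single ((a, 0) : Exp n) 1 ∈ uvxSubalgebra := by
  obtain ⟨N, rfl | rfl⟩ := Int.eq_nat_or_neg a
  · convert pow_mem X_mem_uvxSubalgebra N using 1
    simp [X, single_pow]
  · convert pow_mem Xinv_mem_uvxSubalgebra N using 1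
    simp [Xinv, single_pow]

theorem single_neg_add_single_mem_uvxSubalgebra (j : Fin n) (k : ℤ) :
    single ((0, Pi.single j (-k)) : Exp n) 1 + single (0, Pi.single j k) 1 ∈ uvxSubalgebra := by
  suffices h : ∀ N : ℕ, single ((0, Pi.single j (-N)) : Exp n) 1 +
      single (0, Pi.single j (N : ℤ)) 1 ∈ uvxSubalgebra by
    obtain ⟨N, rfl | rfl⟩ := Int.eq_nat_or_neg k
    · exact h N
    · simpa [add_comm] using h N
  intro N
  have hinv : single ((0, Pi.single j 1) : Exp n) (1 : ℤ) * single (0, -Pi.single j 1) 1 = 1 := by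
    rw [single_mul_single, one_mul, one_def]
    simp [Prod.mk_zero_zero]
  have hmap : (Polynomial.dickson 1 (1 : ℤ) N).map (algebraMap ℤ (A n)) =
      Polynomial.dickson 1 1 N := by
    rw [Polynomial.map_dickson, map_one]
  convert evalUV_mem_uvxSubalgebra
    (Polynomial.aeval (MvPolynomial.X (some j)) (Polynomial.dickson 1 (1 : ℤ) N)) using 1
  rw [← Polynomial.aeval_algHom_apply, evalUV_X_some, v, Polynomial.aeval_def,
    Polynomial.eval₂_eq_eval_map, hmap, Polynomial.dickson_one_one_eval_add_inv _ _ hinv,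
    single_pow, single_pow, add_comm]
  simp [← Pi.single_neg, ← Pi.single_smul]

def ySupport (m : Exp n) : Finset (Fin n) := Finset.univ.filter (m.2 · ≠ 0)

def flipSet (t : Finset (Fin n)) (m : Exp n) : Exp n :=
  (m.1, fun i => if i ∈ t then -m.2 i else m.2 i)

@[simp] theorem flipSet_empty (m : Exp n) : flipSet ∅ m = m := by simp [flipSet]

-- The factors with `m.2 j = 0` are left out so that each exponent in the orbit of `m` under the
-- inversions gets coefficient `1`.
noncomputable def orbitSum (m : Exp n) : A n :=
  single (m.1, 0) 1 *
    ∏ j ∈ ySupport m, (single (0, Pi.single j (-m.2 j)) 1 + single (0, Pi.single j (m.2 j)) 1)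

theorem orbitSum_mem_uvxSubalgebra (m : Exp n) : orbitSum m ∈ uvxSubalgebra :=
  mul_mem (single_fst_mem_uvxSubalgebra _)
    (prod_mem fun j _ => single_neg_add_single_mem_uvxSubalgebra j (m.2 j))

theorem orbitSum_eq_sum (m : Exp n) :
    orbitSum m = ∑ t ∈ (ySupport m).powerset, single (flipSet t m) 1 := by
  classical
  rw [orbitSum, Finset.prod_add, Finset.mul_sum]
  refine Finset.sum_congr rfl fun t ht => ?_
  rw [prod_single, prod_single, single_mul_single, single_mul_single]
  simp only [Finset.prod_const_one, mul_one]
  congr 1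
  ext i
  · simp [flipSet, Prod.fst_sum]
  · simp only [flipSet, Prod.snd_add, Prod.snd_sum, Pi.add_apply, Finset.sum_apply,
      Pi.single_apply, Pi.zero_apply, zero_add]
    by_cases hi : i ∈ t
    · simp [hi]
    · by_cases hm : m.2 i = 0 <;> simp [ySupport, hi, hm]

theorem flipSet_injOn (m : Exp n) :
    Set.InjOn (flipSet · m) ((ySupport m).powerset : Set (Finset (Fin n))) := by
  intro t ht t' ht' h
  have key {s s' : Finset (Fin n)} (hs : s ⊆ ySupport m) (he : flipSet s m = flipSet s' m)
      {i : Fin n} (hi : i ∈ s) : i ∈ s' := by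
    by_contra hi'
    have := congrFun (congrArg Prod.snd he) i
    have hm := hs hi
    simp [flipSet, ySupport, hi, hi'] at this hm
    omega
  ext i
  exact ⟨key (Finset.mem_powerset.mp ht) h, key (Finset.mem_powerset.mp ht') h.symm⟩

theorem coeff_orbitSum_flipSet {m : Exp n} {t : Finset (Fin n)} (ht : t ⊆ ySupport m) :
    (orbitSum m).coeff (flipSet t m) = 1 := by
  rw [orbitSum_eq_sum, coeff_sum, Finset.sum_apply',
    Finset.sum_eq_single_of_mem t (Finset.mem_powerset.mpr ht)]
  · simp
  · intro t' ht' hne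
    rw [coeff_single, Finsupp.single_eq_of_ne]
    exact fun h => hne (flipSet_injOn m ht' (Finset.mem_powerset.mpr ht) h.symm)

theorem exists_flipSet_of_coeff_orbitSum_ne_zero {m z : Exp n}
    (hz : (orbitSum m).coeff z ≠ 0) : ∃ t ⊆ ySupport m, flipSet t m = z := by
  rw [orbitSum_eq_sum, coeff_sum, Finset.sum_apply'] at hz
  obtain ⟨t, ht, hne⟩ := Finset.exists_ne_zero_of_sum_ne_zero hz
  refine ⟨t, Finset.mem_powerset.mp ht, ?_⟩
  by_contra h
  exact hne (by simp [coeff_single, h])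

theorem coeff_flipSet_of_flip_invariant {f : A n} (hf : ∀ j, domCongr ℤ ℤ (flipExp j) f = f)
    (t : Finset (Fin n)) (m : Exp n) : f.coeff (flipSet t m) = f.coeff m := by
  classical
  induction t using Finset.induction_on with
  | empty => simp
  | insert a t ha ih =>
    have : flipSet (insert a t) m = flipExp a (flipSet t m) := by
      ext i
      · rfl
      · rcases eq_or_ne i a with rfl | hi <;> simp [flipSet, *]
    rw [this, coeff_apply_of_domCongr_eq (hf a), ih]

theorem domCongr_flipExp_orbitSum (j : Fin n) (m : Exp n) :
    domCongr ℤ ℤ (flipExp j) (orbitSum m) = orbitSum m := by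
  rw [orbitSum, map_mul, map_prod]
  congr 1
  · simp
  · refine Finset.prod_congr rfl fun i _ => ?_
    simp only [map_add, domCongr_single, flipExp_apply, Function.update_pi_single_neg]
    split_ifs <;> simp [add_comm]

theorem support_sub_orbitSum_ssubset {f : A n} (hf : ∀ j, domCongr ℤ ℤ (flipExp j) f = f)
    {m : Exp n} (hm : m ∈ f.coeff.support) :
    (f - f.coeff m • orbitSum m).coeff.support ⊂ f.coeff.support := by
  have hcoeff (z : Exp n) :
      (f - f.coeff m • orbitSum m).coeff z = f.coeff z - f.coeff m * (orbitSum m).coeff z := by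
    rw [coeff_sub, Finsupp.sub_apply, coeff_smul_apply, smul_eq_mul]
  refine Finset.ssubset_iff_of_subset (fun z hz => ?_) |>.mpr ⟨m, hm, ?_⟩
  · rw [Finsupp.mem_support_iff, hcoeff] at hz
    by_cases horbit : (orbitSum m).coeff z = 0
    · simpa [horbit] using hz
    · obtain ⟨t, ht, rfl⟩ := exists_flipSet_of_coeff_orbitSum_ne_zero horbit
      simp [coeff_orbitSum_flipSet ht, coeff_flipSet_of_flip_invariant hf] at hz
  · have := coeff_orbitSum_flipSet (Finset.empty_subset (ySupport m))
    rw [flipSet_empty] at this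
    rw [Finsupp.mem_support_iff, not_not, hcoeff, this, mul_one, sub_self]

theorem mem_uvxSubalgebra_of_flip_invariant {f : A n}
    (hf : ∀ j, domCongr ℤ ℤ (flipExp j) f = f) : f ∈ uvxSubalgebra := by
  induction hcard : f.coeff.support.card using Nat.strong_induction_on generalizing f with
  | _ k ih =>
  obtain rfl | hne := eq_or_ne f 0
  · exact zero_mem _
  obtain ⟨m, hm⟩ := Finsupp.support_nonempty_iff.mpr (coeff_eq_zero.not.mpr hne)
  have hg (j : Fin n) : domCongr ℤ ℤ (flipExp j) (f - f.coeff m • orbitSum m) =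
      f - f.coeff m • orbitSum m := by
    rw [map_sub, map_zsmul, hf, domCongr_flipExp_orbitSum]
  have := ih _ (hcard ▸ Finset.card_lt_card (support_sub_orbitSum_ssubset hf hm)) hg rfl
  simpa using add_mem this (zsmul_mem (orbitSum_mem_uvxSubalgebra m) (f.coeff m))

end FlipInvariants

section Substitution

def substYXExp (j : Fin n) : Exp n →+ Exp n where
  toFun m := (m.1 + m.2 j, Function.update m.2 j 0)
  map_zero' := by ext <;> simp
  map_add' a b := by
    ext i
    · simp only [Prod.fst_add, Prod.snd_add, Pi.add_apply]
      ring
    · rcases eq_or_ne i j with rfl | h <;> simp [*]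

@[simp] theorem substYXExp_apply (j : Fin n) (m : Exp n) :
    substYXExp j m = (m.1 + m.2 j, Function.update m.2 j 0) := rfl

noncomputable def substYX (j : Fin n) : A n →ₐ[ℤ] A n := mapDomainAlgHom ℤ ℤ (substYXExp j)

def substVU (j : Fin n) (o : Option (Fin n)) : Option (Fin n) :=
  if o = some j then none else o

theorem substYX_single (j : Fin n) (m : Exp n) (c : ℤ) :
    substYX j (single m c) = single (substYXExp j m) c :=
  mapDomain_single

theorem substYX_X (j : Fin n) : substYX j (X n) = X n := by
  simp [X, substYX_single]

theorem substYX_Y (j : Fin n) : substYX j (Y n j) = X n := by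
  simp [Y, X, substYX_single, Function.update_pi_single_zero]

theorem substYX_evalUV (j : Fin n) (p : UVPoly n) :
    substYX j (evalUV p) = evalUV (rename (substVU j) p) := by
  have : (substYX j).comp evalUV = evalUV.comp (rename (substVU j)) := by
    refine MvPolynomial.algHom_ext fun o => ?_
    rcases o with _ | i
    · simp [substVU, u, substYX_single]
    · rcases eq_or_ne i j with rfl | h
      · simp [substVU, u, v, substYX_single, ← Pi.single_neg, Function.update_pi_single_zero]
      · simp [substVU, h, v, substYX_single, ← Pi.single_neg, Function.update_pi_single_zero]
  exact DFunLike.congr_fun this p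

theorem sub_substYX_mem_span (j : Fin n) (f : A n) :
    f - substYX j f ∈ Ideal.span {Y n j - X n} := by
  have hgen : single ((-1, Pi.single j 1) : Exp n) 1 - 1 ∈ Ideal.span {Y n j - X n} := by
    refine Ideal.mem_span_singleton.mpr ⟨Xinv, ?_⟩
    rw [Y, X, Xinv, sub_mul, single_mul_single, single_mul_single, one_def]
    simp [Prod.mk_zero_zero]
  induction f using AddMonoidAlgebra.induction_linear with
  | zero => simp
  | add f g hf hg => simpa [add_sub_add_comm] using add_mem hf hg
  | single m c =>
    have hm : m = substYXExp j m + m.2 j • ((-1, Pi.single j 1) : Exp n) := by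
      ext i
      · simp
      · rcases eq_or_ne i j with rfl | h <;> simp [*]
    have : single m c - substYX j (single m c) =
        single (substYXExp j m) c * (single (m.2 j • ((-1, Pi.single j 1) : Exp n)) 1 - 1) := by
      rw [substYX_single, mul_sub, single_mul_single, ← hm, mul_one, mul_one]
    rw [this]
    refine Ideal.mul_mem_left _ _ (Ideal.span_le.mpr (Set.singleton_subset_iff.mpr hgen) ?_)
    exact Ideal.mem_span_singleton.mpr (single_sub_one_dvd_single_zsmul_sub_one _ _)

theorem mem_span_iff_substYX_eq_zero (j : Fin n) (f : A n) :
    f ∈ Ideal.span {Y n j - X n} ↔ substYX j f = 0 := by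
  refine ⟨fun hf => ?_, fun hf => by simpa [hf] using sub_substYX_mem_span j f⟩
  obtain ⟨c, rfl⟩ := Ideal.mem_span_singleton'.mp hf
  simp [substYX_Y, substYX_X]

theorem rename_substVU_X_none_sub_X_some (j : Fin n) :
    rename (substVU j) (MvPolynomial.X none - MvPolynomial.X (some j) : UVPoly n) = 0 := by
  simp [substVU]

theorem mem_span_iff_rename_substVU_eq_zero (j : Fin n) (w : UVPoly n) :
    w ∈ Ideal.span {(MvPolynomial.X none - MvPolynomial.X (some j) : UVPoly n)} ↔
      rename (substVU j) w = 0 := by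
  refine ⟨fun hw => ?_, fun hw => ?_⟩
  · obtain ⟨c, rfl⟩ := Ideal.mem_span_singleton'.mp hw
    rw [map_mul, rename_substVU_X_none_sub_X_some, mul_zero]
  · have := MvPolynomial.sub_mem_of_forall_X_sub_mem (rename (substVU j))
      (I := Ideal.span {(MvPolynomial.X none - MvPolynomial.X (some j) : UVPoly n)})
      (fun o => ?_) w
    · rwa [hw, sub_zero] at this
    · by_cases ho : o = some j
      · subst ho
        have := neg_mem (Ideal.mem_span_singleton_self
          (MvPolynomial.X none - MvPolynomial.X (some j) : UVPoly n))
        rw [neg_sub] at this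
        simpa [substVU] using this
      · simp [substVU, ho]

theorem pderiv_some_rename_substVU (j : Fin n) (r : UVPoly n) :
    pderiv (some j) (rename (substVU j) r) = 0 := by
  classical
  rw [MvPolynomial.pderiv_rename_eq_sum]
  refine Finset.sum_eq_zero fun o ho => ?_
  simp [substVU] at ho

theorem pderiv_none_rename_substVU (j : Fin n) (r : UVPoly n) :
    pderiv none (rename (substVU j) r) =
      rename (substVU j) (pderiv none r + pderiv (some j) r) := by
  classical
  rw [MvPolynomial.pderiv_rename_eq_sum]
  have : Finset.univ.filter (fun o => substVU j o = none) = {none, some j} := by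
    ext o
    rcases o with _ | i <;> simp [substVU, eq_comm]
  rw [this, Finset.sum_pair (by simp), map_add]

end Substitution

section Euler

theorem D_single (j : Fin n) (m : Exp n) (c : ℤ) :
    D n j (single m c) = single m ((m.1 + m.2 j) * c) := by
  rw [D, coeff_single]
  exact Finsupp.sum_single_index (by simp)

theorem D_add (j : Fin n) (f g : A n) : D n j (f + g) = D n j f + D n j g := by
  rw [D, D, D, coeff_add]
  exact Finsupp.sum_add_index' (fun _ => by simp) (fun _ _ _ => by rw [mul_add, single_add])

noncomputable def euler (j : Fin n) : Derivation ℤ (A n) (A n) :=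
  Derivation.mk' (AddMonoidHom.mk' (D n j) (D_add j)).toIntLinearMap fun f g => by
    simp only [AddMonoidHom.coe_toIntLinearMap, AddMonoidHom.mk'_apply, smul_eq_mul]
    induction f using AddMonoidAlgebra.induction_linear with
    | zero => simp [D]
    | add f₁ f₂ h₁ h₂ => rw [add_mul, D_add, D_add, h₁, h₂]; ring
    | single m c =>
      induction g using AddMonoidAlgebra.induction_linear with
      | zero => simp [D]
      | add g₁ g₂ h₁ h₂ => rw [mul_add, D_add, D_add, h₁, h₂]; ring
      | single m' c' =>
        rw [single_mul_single, D_single, D_single, D_single, single_mul_single,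
          single_mul_single, add_comm m', ← single_add]
        congr 1
        simp only [Prod.fst_add, Prod.snd_add, Pi.add_apply]
        ring

theorem euler_apply (j : Fin n) (f : A n) : euler j f = D n j f := rfl

theorem euler_single (j : Fin n) (m : Exp n) (c : ℤ) :
    euler j (single m c) = single m ((m.1 + m.2 j) * c) := D_single j m c

theorem euler_v_of_ne {i j : Fin n} (h : i ≠ j) : euler j (v n i) = 0 := by
  simp [v, euler_single, h.symm]

theorem euler_X (j : Fin n) : euler j (X n) = X n := by simp [X, euler_single]

theorem euler_u (j : Fin n) : euler j (u n) = X n - Xinv := by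
  simp [u_eq, X, Xinv, euler_single, sub_eq_add_neg]

theorem substYX_euler (j : Fin n) (f : A n) :
    substYX j (euler j f) = euler j (substYX j f) := by
  induction f using AddMonoidAlgebra.induction_linear with
  | zero => simp only [map_zero]
  | add f g hf hg => simp only [map_add, hf, hg]
  | single m c => simp [euler_single, substYX_single]

theorem euler_evalUV {j : Fin n} {R : UVPoly n} (hR : pderiv (some j) R = 0) :
    euler j (evalUV R) = evalUV (pderiv none R) * (X n - Xinv) := by
  rw [Derivation.map_mvPolynomial_aeval, Fintype.sum_option, Finset.sum_eq_single j]
  · simp [hR, euler_u]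
  · intro i _ hi
    simp [euler_v_of_ne hi]
  · simp

theorem eq_zero_of_sq_sub_four_mul_pderiv_add_X_mul {R : UVPoly n}
    (h : (MvPolynomial.X none ^ 2 - 4) * pderiv none R + MvPolynomial.X none * R = 0) :
    R = 0 := by
  have h' := congrArg (MvPolynomial.optionEquivLeft ℤ (Fin n)) h
  simp only [map_add, map_mul, map_sub, map_pow, map_ofNat, map_zero,
    MvPolynomial.optionEquivLeft_X_none, MvPolynomial.optionEquivLeft_pderiv_none] at h'
  rw [← map_ofNat Polynomial.C 4] at h'
  simpa using Polynomial.eq_zero_of_sq_sub_C_mul_derivative_add_X_mul _ h'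

theorem D_mem_span_iff (j : Fin n) (P Q : UVPoly n) :
    D n j (evalUV P + X n * evalUV Q) ∈ Ideal.span {Y n j - X n} ↔
      pderiv none (rename (substVU j) P) = 0 ∧ rename (substVU j) Q = 0 := by
  rw [mem_span_iff_substYX_eq_zero, ← euler_apply, substYX_euler, map_add, map_mul,
    substYX_evalUV, substYX_evalUV, substYX_X, map_add, Derivation.leibniz,
    euler_evalUV (pderiv_some_rename_substVU j P), euler_evalUV (pderiv_some_rename_substVU j Q),
    euler_X, smul_eq_mul, smul_eq_mul]
  set P' := pderiv none (rename (substVU j) P)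
  set Q₀ := rename (substVU j) Q
  set Q' := pderiv none Q₀
  have hXinv : (Xinv : A n) = u n - X n := by rw [u_eq]; ring
  have hsplit : evalUV P' * (X n - Xinv) + (X n * (evalUV Q' * (X n - Xinv)) + evalUV Q₀ * X n) =
      evalUV (-(MvPolynomial.X none * P' + 2 * Q')) +
        X n * evalUV (2 * P' + Q₀ + MvPolynomial.X none * Q') := by
    simp only [map_neg, map_add, map_mul, map_ofNat, evalUV_X_none, hXinv]
    linear_combination 2 * evalUV Q' * X_mul_X
  rw [hsplit, evalUV_add_X_mul_evalUV_eq_zero_iff, neg_eq_zero]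
  refine ⟨fun ⟨h₁, h₂⟩ => ?_, fun ⟨hP, hQ⟩ => ?_⟩
  · have hQ₀ : Q₀ = 0 := eq_zero_of_sq_sub_four_mul_pderiv_add_X_mul
      (by linear_combination MvPolynomial.X none * h₂ - 2 * h₁)
    have hQ' : Q' = 0 := by simp [Q', hQ₀]
    rw [hQ', mul_zero, add_zero] at h₁
    exact ⟨(mul_eq_zero.mp h₁).resolve_left (MvPolynomial.X_ne_zero _), hQ₀⟩
  · simp [Q', hP, hQ]

theorem X_none_mul_pderiv_add_mem_span_iff (j : Fin n) (P : UVPoly n) :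
    MvPolynomial.X none * pderiv none P + MvPolynomial.X (some j) * pderiv (some j) P ∈
        Ideal.span {(MvPolynomial.X none - MvPolynomial.X (some j) : UVPoly n)} ↔
      pderiv none (rename (substVU j) P) = 0 := by
  rw [mem_span_iff_rename_substVU_eq_zero, pderiv_none_rename_substVU]
  simp [substVU, ← mul_add, MvPolynomial.X_ne_zero]

end Euler

section Product

noncomputable def uvProd : UVPoly n := ∏ j, (MvPolynomial.X none - MvPolynomial.X (some j))

theorem X_none_sub_X_some_ne_zero (j : Fin n) :
    (MvPolynomial.X none - MvPolynomial.X (some j) : UVPoly n) ≠ 0 :=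
  sub_ne_zero.mpr (MvPolynomial.X_injective.ne (by simp))

theorem uvProd_dvd_of_rename_substVU_eq_zero {Q : UVPoly n}
    (h : ∀ j, rename (substVU j) Q = 0) : uvProd ∣ Q := by
  classical
  suffices ∀ (s : Finset (Fin n)) (Q : UVPoly n), (∀ j ∈ s, rename (substVU j) Q = 0) →
      ∏ j ∈ s, (MvPolynomial.X none - MvPolynomial.X (some j) : UVPoly n) ∣ Q from
    this Finset.univ Q fun j _ => h j
  intro s
  induction s using Finset.induction_on with
  | empty => simp
  | insert j s hj ih =>
    intro Q hQ
    obtain ⟨g, rfl⟩ := Ideal.mem_span_singleton.mp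
      ((mem_span_iff_rename_substVU_eq_zero j Q).mpr (hQ j (Finset.mem_insert_self j s)))
    rw [Finset.prod_insert hj]
    refine mul_dvd_mul_left _ (ih g fun i hi => ?_)
    have hij : j ≠ i := fun h => hj (h ▸ hi)
    simpa [substVU, hij, X_none_sub_X_some_ne_zero] using hQ i (Finset.mem_insert_of_mem hi)

theorem isSym_uvProd : IsSym n (uvProd (n := n)) := fun σ => by
  simpa [uvProd, map_prod] using
    Equiv.prod_comp σ fun j => (MvPolynomial.X none - MvPolynomial.X (some j) : UVPoly n)

theorem isSym_uvProd_mul_iff {g : UVPoly n} : IsSym n (uvProd * g) ↔ IsSym n g := by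
  refine forall_congr' fun σ => ?_
  rw [map_mul, isSym_uvProd σ]
  exact mul_right_inj' (Finset.prod_ne_zero_iff.mpr fun j _ => X_none_sub_X_some_ne_zero j)

theorem rename_substVU_uvProd_mul (j : Fin n) (g : UVPoly n) :
    rename (substVU j) (uvProd * g) = 0 := by
  rw [uvProd, map_mul, map_prod, Finset.prod_eq_zero (Finset.mem_univ j)
    (rename_substVU_X_none_sub_X_some j), zero_mul]

theorem evalUV_uvProd : evalUV (uvProd (n := n)) = ∏ j, (u n - v n j) := by
  simp [uvProd]

end Product

theorem permE_evalUV_add_X_mul_evalUV_iff (σ : Equiv.Perm (Fin n)) (P Q : UVPoly n) :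
    Finsupp.equivMapDomain (permE n σ) (evalUV P + X n * evalUV Q).coeff =
        (evalUV P + X n * evalUV Q).coeff ↔
      rename (Option.map σ) P = P ∧ rename (Option.map σ) Q = Q := by
  rw [show permE n σ = (permExp σ).toEquiv from rfl, equivMapDomain_coeff_eq_self_iff, map_add,
    map_mul, domCongr_permExp_evalUV, domCongr_permExp_evalUV, ← evalUV_add_X_mul_evalUV_inj]
  simp [X]

theorem flipE_evalUV_add_X_mul_evalUV (j : Fin n) (P Q : UVPoly n) :
    Finsupp.equivMapDomain (flipE n j) (evalUV P + X n * evalUV Q).coeff =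
      (evalUV P + X n * evalUV Q).coeff := by
  rw [show flipE n j = (flipExp j).toEquiv from rfl, equivMapDomain_coeff_eq_self_iff, map_add,
    map_mul, domCongr_flipExp_evalUV, domCongr_flipExp_evalUV]
  simp [X]

theorem evalUV_add_X_mul_evalUV_mem_J_iff (P Q : UVPoly n) :
    evalUV P + X n * evalUV Q ∈ J n ↔ IsSym n P ∧ IsSym n Q ∧
      ∀ j, pderiv none (rename (substVU j) P) = 0 ∧ rename (substVU j) Q = 0 := by
  simp only [J, Set.mem_ofPred_eq, permE_evalUV_add_X_mul_evalUV_iff,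
    flipE_evalUV_add_X_mul_evalUV, D_mem_span_iff, IsSym, forall_and, implies_true, true_and,
    and_assoc]

theorem exists_evalUV_add_X_mul_evalUV_of_mem_J {f : A n} (hf : f ∈ J n) :
    ∃ P Q : UVPoly n, f = evalUV P + X n * evalUV Q :=
  mem_uvxSubalgebra_of_flip_invariant fun j =>
    (equivMapDomain_coeff_eq_self_iff (flipExp j) f).mp (hf.2.1 j)

variable (n)

/-- the ring `J(C(n))` decomposes as the direct sum `J = J⁺ ⊕ J⁻`. -/
theorem statement2 :
    (J n = {f | ∃ a ∈ Jplus n, ∃ b ∈ Jminus n, f = a + b}) ∧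
    (∀ f, f ∈ Jplus n → f ∈ Jminus n → f = 0) := by
  refine ⟨Set.ext fun f => ⟨fun hf => ?_, ?_⟩, ?_⟩
  · obtain ⟨P, Q, rfl⟩ := exists_evalUV_add_X_mul_evalUV_of_mem_J hf
    obtain ⟨hP, hQ, hcond⟩ := (evalUV_add_X_mul_evalUV_mem_J_iff P Q).mp hf
    obtain ⟨g, rfl⟩ := uvProd_dvd_of_rename_substVU_eq_zero fun j => (hcond j).2
    refine ⟨evalUV P, ⟨P, hP, rfl, fun j => (X_none_mul_pderiv_add_mem_span_iff j P).mpr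
      (hcond j).1⟩, X n * (∏ j, (u n - v n j)) * evalUV g, ⟨g, isSym_uvProd_mul_iff.mp hQ, rfl⟩, ?_⟩
    rw [map_mul, evalUV_uvProd, mul_assoc]
  · rintro ⟨_, ⟨P, hP, rfl, hplus⟩, _, ⟨g, hg, rfl⟩, rfl⟩
    convert (evalUV_add_X_mul_evalUV_mem_J_iff P (uvProd * g)).mpr ⟨hP,
      isSym_uvProd_mul_iff.mpr hg, fun j => ⟨(X_none_mul_pderiv_add_mem_span_iff j P).mp
        (hplus j), rename_substVU_uvProd_mul j g⟩⟩ using 1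
    rw [map_mul, evalUV_uvProd, mul_assoc]
  · rintro f ⟨P, -, rfl, -⟩ ⟨g, -, hf⟩
    have : evalUV P + X n * evalUV (-(uvProd * g)) = 0 := by
      rw [map_neg, map_mul, evalUV_uvProd]
      linear_combination hf
    obtain ⟨rfl, -⟩ := evalUV_add_X_mul_evalUV_eq_zero_iff.mp this
    exact map_zero _

end Stmt2
end

section
/- Consider the ring J = { f ∈ Z[x^{±1}, y^{±1}] : f is invariant under x ↦ x^{-1} and y ↦ y^{-1} independently, and x·∂f/∂x + y·∂f/∂y lies in the ideal generated by (x − y)² }. Set u = x + x^{-1}, v = y + y^{-1}. Then J = { c + (u − v)²·g(u,v) : c ∈ Z, g ∈ Z[u,v] }. -/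
namespace Stmt6

/-- the monomial `x^a y^b` in `ℤ[x^{±1}, y^{±1}]`. -/
noncomputable def e (a b : ℤ) : AddMonoidAlgebra ℤ (ℤ × ℤ) :=
  AddMonoidAlgebra.single (a, b) 1

noncomputable def X : AddMonoidAlgebra ℤ (ℤ × ℤ) := e 1 0
noncomputable def Y : AddMonoidAlgebra ℤ (ℤ × ℤ) := e 0 1
noncomputable def u : AddMonoidAlgebra ℤ (ℤ × ℤ) := e 1 0 + e (-1) 0
noncomputable def v : AddMonoidAlgebra ℤ (ℤ × ℤ) := e 0 1 + e 0 (-1)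

/-- inversion `x ↦ x^{-1}` on exponents. -/
def flipX : (ℤ × ℤ) ≃ (ℤ × ℤ) :=
  Function.Involutive.toPerm (fun m => (-m.1, m.2)) (by intro m; simp)

/-- inversion `y ↦ y^{-1}` on exponents. -/
def flipY : (ℤ × ℤ) ≃ (ℤ × ℤ) :=
  Function.Involutive.toPerm (fun m => (m.1, -m.2)) (by intro m; simp)

/-- the Euler operator `x∂/∂x + y∂/∂y`. -/
noncomputable def D (f : AddMonoidAlgebra ℤ (ℤ × ℤ)) : AddMonoidAlgebra ℤ (ℤ × ℤ) :=
  Finsupp.sum f.coeff fun m c => AddMonoidAlgebra.single m ((m.1 + m.2) * c)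

/-!
An invariant Laurent polynomial is a combination of orbit sums
`(x^a + x^{-a})(y^b + y^{-b})`, and `x^a + x^{-a}` is a Dickson polynomial in `u`; so the invariants
are `ℤ[u, v]`. Expand `f ∈ ℤ[u, v]` around the diagonal as `f = P(u) + (u - v) Q(u) + (u - v)² g`.
The Euler operator `E` fixes `x - y`, and `u - v = (x - y)(1 - x⁻¹y⁻¹)`, so `E((u - v)² g)` always
lies in `((x - y)²)`. Since `E f ∈ ((x - y)²)` vanishes on the diagonal `y = x = t`, so does
`P'(s)(t - t⁻¹)` with `s = t + t⁻¹`, and `P` is constant. Cancelling one factor `x - y` and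
restricting again gives `(s² - 4) Q'(s) + s Q(s) = 0`, up to the unit `t⁻¹`. As `s` is
transcendental, the polynomial `(X² - 4) Q' + X Q` vanishes, which forces `Q = 0`.
-/

open scoped Polynomial LaurentPolynomial
open LaurentPolynomial (T)

theorem pow_add_pow_mem_adjoin_add {R A : Type*} [CommRing R] [CommRing A] [Algebra R A]
    {a b : A} (hab : a * b = 1) (n : ℕ) : a ^ n + b ^ n ∈ Algebra.adjoin R {a + b} := by
  rw [← Polynomial.dickson_one_one_eval_add_inv a b hab n, ← map_one (algebraMap R A),
    ← Polynomial.map_dickson, Polynomial.eval_map_algebraMap]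
  exact Polynomial.aeval_mem_adjoin_singleton R _

theorem sum_single_zsmul_mem_adjoin {R G : Type*} [CommRing R] [AddCommGroup G] (g : G) (n : ℤ) :
    ∑ k ∈ {n, -n}, AddMonoidAlgebra.single (k • g) (1 : R) ∈
      Algebra.adjoin R {AddMonoidAlgebra.single g 1 + AddMonoidAlgebra.single (-g) 1} := by
  obtain ⟨k, hk⟩ : ∃ k : ℕ, ({n, -n} : Finset ℤ) = {(k : ℤ), -(k : ℤ)} := by
    obtain ⟨k, rfl | rfl⟩ := Int.eq_nat_or_neg n
    exacts [⟨k, rfl⟩, ⟨k, by rw [neg_neg, Finset.pair_comm]⟩]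
  rw [hk]
  rcases Nat.eq_zero_or_pos k with rfl | hk0
  · simp only [Nat.cast_zero, neg_zero, Finset.mem_singleton, Finset.insert_eq_of_mem,
      Finset.sum_singleton, zero_smul]
    exact one_mem _
  · have hpow (h : G) :
        AddMonoidAlgebra.single (k • h) (1 : R) = AddMonoidAlgebra.single h 1 ^ k := by
      simp [AddMonoidAlgebra.single_pow]
    rw [Finset.sum_pair (by omega), neg_zsmul, ← zsmul_neg, natCast_zsmul, natCast_zsmul, hpow,
      hpow]
    refine pow_add_pow_mem_adjoin_add ?_ k
    simp [AddMonoidAlgebra.single_mul_single]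
    rfl

theorem exists_eq_taylor {R A : Type*} [CommRing R] [CommRing A] [Algebra R A] {a b f : A}
    (hf : f ∈ Algebra.adjoin R {a, b}) :
    ∃ P Q : R[X], ∃ g ∈ Algebra.adjoin R {a, b},
      f = Polynomial.aeval a P + (a - b) * Polynomial.aeval a Q + (a - b) ^ 2 * g := by
  have ha : a ∈ Algebra.adjoin R {a, b} := Algebra.subset_adjoin (by simp)
  have hb : b ∈ Algebra.adjoin R {a, b} := Algebra.subset_adjoin (by simp)
  have hP (P : R[X]) : Polynomial.aeval a P ∈ Algebra.adjoin R {a, b} :=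
    Algebra.adjoin_le (by simpa using ha) (Polynomial.aeval_mem_adjoin_singleton R a)
  induction hf using Algebra.adjoin_induction with
  | mem x hx =>
    rcases hx with rfl | rfl
    · exact ⟨Polynomial.X, 0, 0, zero_mem _, by simp⟩
    · exact ⟨Polynomial.X, -1, 0, zero_mem _, by simp⟩
  | algebraMap r => exact ⟨Polynomial.C r, 0, 0, zero_mem _, by simp⟩
  | add x y _ _ hx hy =>
    obtain ⟨P₁, Q₁, g₁, hg₁, rfl⟩ := hx
    obtain ⟨P₂, Q₂, g₂, hg₂, rfl⟩ := hy
    exact ⟨P₁ + P₂, Q₁ + Q₂, g₁ + g₂, add_mem hg₁ hg₂, by simp only [map_add]; ring⟩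
  | mul x y _ hy hx' hy' =>
    obtain ⟨P₁, Q₁, g₁, hg₁, rfl⟩ := hx'
    obtain ⟨P₂, Q₂, g₂, hg₂, rfl⟩ := hy'
    refine ⟨P₁ * P₂, P₁ * Q₂ + Q₁ * P₂,
      Polynomial.aeval a (Q₁ * Q₂) + g₁ * (Polynomial.aeval a P₂ + (a - b) * Polynomial.aeval a Q₂ +
        (a - b) ^ 2 * g₂) + g₂ * (Polynomial.aeval a P₁ + (a - b) * Polynomial.aeval a Q₁), ?_, ?_⟩
    · exact add_mem (add_mem (hP _) (mul_mem hg₁ hy))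
        (mul_mem hg₂ (add_mem (hP _) (mul_mem (sub_mem ha hb) (hP _))))
    · simp only [map_add, map_mul]; ring

theorem transcendental_T_add_T_neg {R : Type*} [CommRing R] [IsDomain R] :
    Transcendental R (T 1 + T (-1) : R[T;T⁻¹]) := by
  set s : R[T;T⁻¹] := T 1 + T (-1)
  have hT : Transcendental R (T 1 : R[T;T⁻¹]) := by
    rw [transcendental_iff_injective, ← Polynomial.toLaurent_X, ← Polynomial.toLaurentAlg_apply,
      Polynomial.aeval_algHom, Polynomial.aeval_X_left, AlgHom.comp_id, Polynomial.coe_toLaurentAlg]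
    exact Polynomial.toLaurent_injective
  intro hs
  have : Algebra.IsAlgebraic R (Algebra.adjoin R {s}) :=
    (Subalgebra.isAlgebraic_iff _).mp (Algebra.isAlgebraic_adjoin_singleton_iff.mpr hs)
  -- `T 1` is a root of `Z ^ 2 - s Z + 1`, hence algebraic along with `s`
  refine hT (IsAlgebraic.restrictScalars R (S := Algebra.adjoin R {s}) ?_)
  let t : Algebra.adjoin R {s} := ⟨s, Algebra.self_mem_adjoin_singleton R s⟩
  refine ⟨Polynomial.X ^ 2 - Polynomial.C t * Polynomial.X + 1, fun h => ?_, ?_⟩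
  · simpa [Polynomial.coeff_one] using congrArg (Polynomial.coeff · 2) h
  · simp only [map_add, map_sub, map_mul, map_pow, Polynomial.aeval_X, Polynomial.aeval_C, map_one]
    change (T 1 : R[T;T⁻¹]) ^ 2 - (T 1 + T (-1)) * T 1 + 1 = 0
    rw [sq, add_mul, ← LaurentPolynomial.T_add, ← LaurentPolynomial.T_add]
    simp

theorem eq_zero_of_sq_sub_four_mul_derivative_add_X_mul {R : Type*} [CommRing R] [IsDomain R]
    [CharZero R] {Q : R[X]}
    (h : (Polynomial.X ^ 2 - Polynomial.C 4) * Polynomial.derivative Q + Polynomial.X * Q = 0) :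
    Q = 0 := by
  -- the coefficient of `X ^ (n + 1)`, for `n` the degree of `Q`, is `(n + 1)` times the leading one
  set n := Q.natDegree
  have hX2 : (Polynomial.X ^ 2 * Polynomial.derivative Q).coeff (n + 1) = n * Q.coeff n := by
    rcases n with _ | k
    · simp [sq, mul_assoc]
    · simp [sq, mul_assoc, Polynomial.coeff_derivative, mul_comm]
  have hC4 : (Polynomial.C 4 * Polynomial.derivative Q).coeff (n + 1) = 0 := by
    simp [Polynomial.coeff_derivative,
      Polynomial.coeff_eq_zero_of_natDegree_lt (by omega : n < n + 2)]
  have hlead := congrArg (Polynomial.coeff · (n + 1)) h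
  simp only [sub_mul, Polynomial.coeff_add, Polynomial.coeff_sub, hX2, hC4,
    Polynomial.coeff_X_mul, Polynomial.coeff_zero] at hlead
  have : ((n : R) + 1) * Q.leadingCoeff = 0 := by
    rw [Polynomial.leadingCoeff]; linear_combination hlead
  exact Polynomial.leadingCoeff_eq_zero.mp
    ((mul_eq_zero.mp this).resolve_left (by exact_mod_cast n.succ_ne_zero))

local notation "L" => AddMonoidAlgebra ℤ (ℤ × ℤ)

lemma e_mul_e (a b c d : ℤ) : e a b * e c d = e (a + c) (b + d) := by
  simp [e, AddMonoidAlgebra.single_mul_single]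

lemma one_eq_e : (1 : L) = e 0 0 := rfl

lemma D_add (f g : L) : D (f + g) = D f + D g := by
  unfold D
  rw [AddMonoidAlgebra.coeff_add, Finsupp.sum_add_index]
  · simp
  · intro m _ c d; rw [mul_add, AddMonoidAlgebra.single_add]

lemma D_single (m : ℤ × ℤ) (c : ℤ) :
    D (AddMonoidAlgebra.single m c) = AddMonoidAlgebra.single m ((m.1 + m.2) * c) := by
  simp [D]

lemma D_mul (f g : L) : D (f * g) = f * D g + g * D f := by
  induction f using AddMonoidAlgebra.induction_linear with
  | zero => simp [D]
  | add f f' hf hf' => rw [add_mul, D_add, hf, hf', D_add]; ring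
  | single m c =>
    induction g using AddMonoidAlgebra.induction_linear with
    | zero => simp [D]
    | add g g' hg hg' => rw [mul_add, D_add, hg, hg', D_add]; ring
    | single n d =>
      rw [AddMonoidAlgebra.single_mul_single, D_single, D_single, D_single,
        AddMonoidAlgebra.single_mul_single, AddMonoidAlgebra.single_mul_single,
        add_comm n m, ← AddMonoidAlgebra.single_add]
      congr 1
      simp only [Prod.fst_add, Prod.snd_add]
      ring

noncomputable def euler : Derivation ℤ L L :=
  Derivation.mk' (AddMonoidHom.mk' D D_add).toIntLinearMap fun f g => D_mul f g

lemma euler_apply (f : L) : euler f = D f := rfl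

lemma euler_e (a b : ℤ) : euler (e a b) = (a + b) • e a b := by
  simp [euler_apply, e, D_single, AddMonoidAlgebra.smul_single]

/-- Restriction to the diagonal `y = x`, written `T` in `ℤ[T;T⁻¹]`. -/
noncomputable def toDiagonal : L →ₐ[ℤ] ℤ[T;T⁻¹] :=
  AddMonoidAlgebra.mapDomainAlgHom ℤ ℤ (AddMonoidHom.fst ℤ ℤ + AddMonoidHom.snd ℤ ℤ)

lemma toDiagonal_e (a b : ℤ) : toDiagonal (e a b) = T (a + b) := by
  rw [toDiagonal, e, AddMonoidAlgebra.mapDomainAlgHom_apply, AddMonoidAlgebra.mapDomain_single]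
  rfl

noncomputable def invX : L ≃ₐ[ℤ] L :=
  AddMonoidAlgebra.domCongr ℤ ℤ ((AddEquiv.neg ℤ).prodCongr (AddEquiv.refl ℤ))

noncomputable def invY : L ≃ₐ[ℤ] L :=
  AddMonoidAlgebra.domCongr ℤ ℤ ((AddEquiv.refl ℤ).prodCongr (AddEquiv.neg ℤ))

lemma coeff_invX (f : L) (m : ℤ × ℤ) : (invX f).coeff m = f.coeff (-m.1, m.2) :=
  AddMonoidAlgebra.coeff_domCongr _ _ _

lemma coeff_invY (f : L) (m : ℤ × ℤ) : (invY f).coeff m = f.coeff (m.1, -m.2) :=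
  AddMonoidAlgebra.coeff_domCongr _ _ _

lemma equivMapDomain_flipX (f : L) : Finsupp.equivMapDomain flipX f.coeff = (invX f).coeff := by
  ext m; rw [Finsupp.equivMapDomain_apply, coeff_invX]; rfl

lemma equivMapDomain_flipY (f : L) : Finsupp.equivMapDomain flipY f.coeff = (invY f).coeff := by
  ext m; rw [Finsupp.equivMapDomain_apply, coeff_invY]; rfl

lemma invX_e (a b : ℤ) : invX (e a b) = e (-a) b := by
  simp [invX, e]; rfl

lemma invY_e (a b : ℤ) : invY (e a b) = e a (-b) := by
  simp [invY, e]; rfl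

lemma adjoin_le_fixed : Algebra.adjoin ℤ {u, v} ≤
    AlgHom.equalizer (invX : L →ₐ[ℤ] L) (AlgHom.id ℤ L) ⊓
      AlgHom.equalizer (invY : L →ₐ[ℤ] L) (AlgHom.id ℤ L) := by
  rw [Algebra.adjoin_le_iff]
  rintro _ (rfl | rfl) <;> simp [u, v, invX_e, invY_e, add_comm]

noncomputable def orbitSum (m : ℤ × ℤ) : L :=
  ∑ p ∈ ({m.1, -m.1} ×ˢ {m.2, -m.2} : Finset (ℤ × ℤ)), e p.1 p.2

lemma orbitSum_mem_adjoin (m : ℤ × ℤ) : orbitSum m ∈ Algebra.adjoin ℤ {u, v} := by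
  have hprod : orbitSum m =
      (∑ a ∈ {m.1, -m.1}, AddMonoidAlgebra.single (a • ((1 : ℤ), (0 : ℤ))) 1) *
        ∑ b ∈ {m.2, -m.2}, AddMonoidAlgebra.single (b • ((0 : ℤ), (1 : ℤ))) 1 := by
    simp [orbitSum, Finset.sum_product, Finset.sum_mul_sum, e, AddMonoidAlgebra.single_mul_single]
  rw [hprod]
  refine mul_mem (Algebra.adjoin_mono ?_ (sum_single_zsmul_mem_adjoin _ _))
    (Algebra.adjoin_mono ?_ (sum_single_zsmul_mem_adjoin _ _)) <;> simp [u, v, e]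

lemma coeff_orbitSum (m z : ℤ × ℤ) :
    (orbitSum m).coeff z = if |z.1| = |m.1| ∧ |z.2| = |m.2| then 1 else 0 := by
  simp only [orbitSum, e, Prod.mk.eta, AddMonoidAlgebra.coeff_sum, AddMonoidAlgebra.coeff_single,
    Finsupp.finsetSum_apply, Finsupp.single_apply, Finset.sum_ite_eq', Finset.mem_product,
    Finset.mem_insert, Finset.mem_singleton, abs_eq_abs]

lemma coeff_abs_of_fixed {f : L} (hx : invX f = f) (hy : invY f = f) (z : ℤ × ℤ) :
    f.coeff (|z.1|, |z.2|) = f.coeff z := by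
  have hx' (a b : ℤ) : f.coeff (-a, b) = f.coeff (a, b) := by rw [← coeff_invX f (a, b), hx]
  have hy' (a b : ℤ) : f.coeff (a, -b) = f.coeff (a, b) := by rw [← coeff_invY f (a, b), hy]
  rcases abs_choice z.1 with h₁ | h₁ <;> rcases abs_choice z.2 with h₂ | h₂ <;>
    simp [h₁, h₂, hx', hy']

lemma eq_sum_orbitSum {f : L} (hx : invX f = f) (hy : invY f = f) :
    f = ∑ m ∈ f.coeff.support.image (fun z => (|z.1|, |z.2|)), f.coeff m • orbitSum m := by
  ext z
  simp only [AddMonoidAlgebra.coeff_sum, AddMonoidAlgebra.coeff_smul, Finsupp.finsetSum_apply,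
    Finsupp.smul_apply, coeff_orbitSum, smul_eq_mul, mul_ite, mul_one, mul_zero]
  rw [Finset.sum_eq_single (|z.1|, |z.2|)]
  · simp [coeff_abs_of_fixed hx hy]
  · rintro _ hm hne
    obtain ⟨m, -, rfl⟩ := Finset.mem_image.mp hm
    rw [if_neg]
    simp only [abs_abs]
    rintro ⟨h₁, h₂⟩
    exact hne (by rw [h₁, h₂])
  · intro hz
    simp only [abs_abs, and_self, if_true, coeff_abs_of_fixed hx hy]
    by_contra h
    exact hz (Finset.mem_image.mpr ⟨z, Finsupp.mem_support_iff.mpr h, rfl⟩)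

theorem mem_adjoin_iff_fixed (f : L) :
    f ∈ Algebra.adjoin ℤ {u, v} ↔ invX f = f ∧ invY f = f := by
  refine ⟨fun hf => adjoin_le_fixed hf, fun ⟨hx, hy⟩ => ?_⟩
  rw [eq_sum_orbitSum hx hy]
  exact Subalgebra.sum_mem _ fun m _ => Subalgebra.smul_mem _ (orbitSum_mem_adjoin m) _

lemma adjoin_eq_range_aeval : Algebra.adjoin ℤ {u, v} = (MvPolynomial.aeval ![u, v]).range := by
  rw [← Algebra.adjoin_range_eq_range_aeval, Matrix.range_cons, Matrix.range_cons,
    Matrix.range_empty, Set.union_empty, Set.singleton_union]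

local notation "I" => Ideal.span {(X - Y) ^ 2}

lemma euler_X_sub_Y : euler (X - Y) = X - Y := by
  simp [X, Y, euler_e]

lemma u_sub_v_eq : u - v = (X - Y) * (1 - e (-1) (-1)) := by
  simp only [u, v, X, Y, one_eq_e, mul_sub, sub_mul, e_mul_e]
  norm_num
  abel

lemma euler_sq_mul_mem (g : L) : euler ((u - v) ^ 2 * g) ∈ I := by
  rw [u_sub_v_eq, mul_pow, mul_assoc, Derivation.leibniz, Derivation.leibniz_pow, euler_X_sub_Y,
    Ideal.mem_span_singleton']
  exact ⟨euler ((1 - e (-1) (-1)) ^ 2 * g) + 2 * ((1 - e (-1) (-1)) ^ 2 * g), by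
    simp only [smul_eq_mul, nsmul_eq_mul]; push_cast; ring⟩

lemma euler_u_sub_v_mul (q : L) :
    euler ((u - v) * q) = (X - Y) * ((1 + e (-1) (-1)) * q + (1 - e (-1) (-1)) * euler q) := by
  have hw : euler (e (-1) (-1)) = -2 * e (-1) (-1) := by
    rw [euler_e]; norm_num
  rw [u_sub_v_eq, Derivation.leibniz, Derivation.leibniz, euler_X_sub_Y,
    map_sub, Derivation.map_one_eq_zero, hw]
  simp only [smul_eq_mul]
  ring

lemma toDiagonal_X : toDiagonal X = T 1 := by simp [X, toDiagonal_e]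
lemma toDiagonal_Y : toDiagonal Y = T 1 := by simp [Y, toDiagonal_e]
lemma toDiagonal_u : toDiagonal u = T 1 + T (-1) := by simp [u, toDiagonal_e]

lemma toDiagonal_euler_u : toDiagonal (euler u) = T 1 - T (-1) := by
  simp [u, euler_e, toDiagonal_e, sub_eq_add_neg]

lemma toDiagonal_eq_zero_of_mem {f : L} (hf : f ∈ Ideal.span {X - Y}) : toDiagonal f = 0 := by
  obtain ⟨g, rfl⟩ := Ideal.mem_span_singleton'.mp hf
  simp [toDiagonal_X, toDiagonal_Y]

lemma span_sq_le_span : I ≤ Ideal.span {X - Y} :=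
  Ideal.span_singleton_le_span_singleton.mpr (dvd_pow_self _ two_ne_zero)

lemma X_sub_Y_ne_zero : X - Y ≠ 0 := by
  rw [sub_ne_zero]
  intro h
  simpa [X, Y, e] using congrArg (AddMonoidAlgebra.coeff · (1, 0)) h

lemma T_one_sub_T_neg_one_ne_zero : (T 1 - T (-1) : ℤ[T;T⁻¹]) ≠ 0 := by
  rw [sub_ne_zero]
  intro h
  simpa using congrArg LaurentPolynomial.degree h

lemma derivative_eq_zero_of_euler_mem {P : ℤ[X]} {q : L}
    (h : euler (Polynomial.aeval u P + (u - v) * q) ∈ I) : Polynomial.derivative P = 0 := by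
  have h0 := toDiagonal_eq_zero_of_mem (span_sq_le_span h)
  rw [map_add, euler_u_sub_v_mul, Derivation.map_aeval, smul_eq_mul, map_add, map_mul, map_mul,
    toDiagonal_eq_zero_of_mem (Ideal.mem_span_singleton_self _), zero_mul, add_zero,
    ← Polynomial.aeval_algHom_apply, toDiagonal_u, toDiagonal_euler_u] at h0
  exact transcendental_iff.mp transcendental_T_add_T_neg _
    ((mul_eq_zero.mp h0).resolve_right T_one_sub_T_neg_one_ne_zero)

lemma eq_zero_of_euler_mem {Q : ℤ[X]} (h : euler ((u - v) * Polynomial.aeval u Q) ∈ I) :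
    Q = 0 := by
  rw [euler_u_sub_v_mul, Ideal.mem_span_singleton, sq, mul_dvd_mul_iff_left X_sub_Y_ne_zero,
    ← Ideal.mem_span_singleton] at h
  have h0 := toDiagonal_eq_zero_of_mem h
  rw [map_add, map_mul, map_mul, map_add, map_sub, map_one, toDiagonal_e, Derivation.map_aeval,
    smul_eq_mul, map_mul, ← Polynomial.aeval_algHom_apply, ← Polynomial.aeval_algHom_apply,
    toDiagonal_u, toDiagonal_euler_u, LaurentPolynomial.T_add] at h0
  have hT : (T 1 * T (-1) : ℤ[T;T⁻¹]) = 1 := by rw [← LaurentPolynomial.T_add]; rfl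
  refine eq_zero_of_sq_sub_four_mul_derivative_add_X_mul
    (transcendental_iff.mp transcendental_T_add_T_neg _ ?_)
  simp only [map_add, map_mul, map_sub, map_pow, Polynomial.aeval_X, map_ofNat]
  linear_combination T 1 * h0 + (-T (-1) * Polynomial.aeval (T 1 + T (-1)) Q +
    (T 1 * T (-1) + 4 - T (-1) ^ 2) *
      Polynomial.aeval (T 1 + T (-1)) (Polynomial.derivative Q)) * hT

/-- the ring `J(A(1,1))`:
`{f ∈ ℤ[x^{±1},y^{±1}]^{ℤ₂×ℤ₂} : x∂f/∂x + y∂f/∂y ∈ ((x−y)²)}`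
equals `{c + (u−v)²·g(u,v) : c ∈ ℤ, g ∈ ℤ[u,v]}`. -/
theorem statement6 :
    {f : AddMonoidAlgebra ℤ (ℤ × ℤ) |
        Finsupp.equivMapDomain flipX f.coeff = f.coeff ∧ Finsupp.equivMapDomain flipY f.coeff = f.coeff ∧
        D f ∈ Ideal.span {(X - Y) ^ 2}} =
    {f : AddMonoidAlgebra ℤ (ℤ × ℤ) |
        ∃ (c : ℤ) (g : MvPolynomial (Fin 2) ℤ),
          f = c • 1 + (u - v) ^ 2 * MvPolynomial.aeval ![u, v] g} := by
  ext f
  simp only [Set.mem_ofPred_eq, equivMapDomain_flipX, equivMapDomain_flipY,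
    AddMonoidAlgebra.coeff_inj, ← and_assoc, ← mem_adjoin_iff_fixed, ← euler_apply]
  constructor
  · rintro ⟨hf, hD⟩
    obtain ⟨P, Q, g, hg, rfl⟩ := exists_eq_taylor hf
    have hPQ : euler (Polynomial.aeval u P + (u - v) * Polynomial.aeval u Q) ∈ I := by
      simpa using sub_mem hD (euler_sq_mul_mem g)
    have hP := derivative_eq_zero_of_euler_mem hPQ
    have hQ : Q = 0 := eq_zero_of_euler_mem (by simpa [Derivation.map_aeval, hP] using hPQ)
    obtain ⟨G, rfl⟩ := adjoin_eq_range_aeval ▸ hg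
    exact ⟨P.coeff 0, G, by rw [Polynomial.eq_C_of_derivative_eq_zero hP, hQ]; simp⟩
  · rintro ⟨c, g, rfl⟩
    have hu : u ∈ Algebra.adjoin ℤ {u, v} := Algebra.subset_adjoin (by simp)
    have hv : v ∈ Algebra.adjoin ℤ {u, v} := Algebra.subset_adjoin (by simp)
    have hg : MvPolynomial.aeval ![u, v] g ∈ Algebra.adjoin ℤ {u, v} :=
      adjoin_eq_range_aeval ▸ AlgHom.mem_range_self _ g
    refine ⟨add_mem (Subalgebra.smul_mem _ (one_mem _) c)
      (mul_mem (pow_mem (sub_mem hu hv) 2) hg), ?_⟩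
    rw [map_add, map_zsmul, Derivation.map_one_eq_zero, smul_zero, zero_add]
    exact euler_sq_mul_mem _

end Stmt6
end

section
/- In the Laurent polynomial ring Z[x^{±1}, y^{±1}] with u = x + x^{-1}, v = y + y^{-1}, the identity u − v = (x − y)(1 − 1/(xy)) holds; consequently, for any g ∈ Z[u,v], the element (u − v)²·g satisfies x·∂f/∂x + y·∂f/∂y ∈ ((x−y)²). -/
/-!
The Euler operator `D` is the derivation of `ℤ[x^{±1}, y^{±1}]` multiplying `x^a y^b` by `a + b`.
Both `u - v = (x - y)(1 - 1/(xy))` and `D (u - v) = (x - y)(1 + 1/(xy))` are divisible by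
`x - y`, so by the Leibniz rule `D ((u - v)² g) = (u - v)² D g + 2 g (u - v) D (u - v)` is
divisible by `(x - y)²`.
-/

namespace Stmt7

/-- the monomial `x^a y^b` in `ℤ[x^{±1}, y^{±1}]`. -/
noncomputable def e (a b : ℤ) : AddMonoidAlgebra ℤ (ℤ × ℤ) :=
  AddMonoidAlgebra.single (a, b) 1

noncomputable def X : AddMonoidAlgebra ℤ (ℤ × ℤ) := e 1 0
noncomputable def Y : AddMonoidAlgebra ℤ (ℤ × ℤ) := e 0 1
noncomputable def u : AddMonoidAlgebra ℤ (ℤ × ℤ) := e 1 0 + e (-1) 0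
noncomputable def v : AddMonoidAlgebra ℤ (ℤ × ℤ) := e 0 1 + e 0 (-1)

/-- the Euler operator `x∂/∂x + y∂/∂y`. -/
noncomputable def D (f : AddMonoidAlgebra ℤ (ℤ × ℤ)) : AddMonoidAlgebra ℤ (ℤ × ℤ) :=
  Finsupp.sum f.coeff fun m c => AddMonoidAlgebra.single m ((m.1 + m.2) * c)

end Stmt7

namespace AddMonoidAlgebra

variable {k G : Type*} [CommSemiring k] [AddCommMonoid G] (φ : G →+ k)

noncomputable def degreeLinearMap : AddMonoidAlgebra k G →ₗ[k] AddMonoidAlgebra k G where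
  toFun f := f.coeff.sum fun m c => single m (φ m * c)
  map_add' f g := by
    rw [coeff_add]
    exact Finsupp.sum_add_index' (by simp) (by simp [mul_add])
  map_smul' r f := by
    rw [coeff_smul, Finsupp.sum_smul_index' (by simp), RingHom.id_apply, Finsupp.smul_sum]
    simp only [smul_single, smul_eq_mul, mul_left_comm]

@[simp]
theorem degreeLinearMap_single (m : G) (c : k) :
    degreeLinearMap φ (single m c) = single m (φ m * c) := by
  simp [degreeLinearMap]

theorem degreeLinearMap_mul (f g : AddMonoidAlgebra k G) :
    degreeLinearMap φ (f * g) = f * degreeLinearMap φ g + g * degreeLinearMap φ f := by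
  induction f using induction_linear with
  | zero => simp
  | add f₁ f₂ h₁ h₂ => simp only [add_mul, map_add, h₁, h₂]; ring
  | single m c =>
    induction g using induction_linear with
    | zero => simp
    | add g₁ g₂ h₁ h₂ => simp only [mul_add, map_add, h₁, h₂]; ring
    | single n d =>
      simp only [single_mul_single, degreeLinearMap_single, map_add, add_comm n m,
        ← single_add]
      congr 1
      ring

noncomputable def degreeDerivation :
    Derivation k (AddMonoidAlgebra k G) (AddMonoidAlgebra k G) where
  toLinearMap := degreeLinearMap φ
  map_one_eq_zero' := by simp [one_def]
  leibniz' := degreeLinearMap_mul φ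

@[simp]
theorem degreeDerivation_single (m : G) (c : k) :
    degreeDerivation φ (single m c) = single m (φ m * c) :=
  degreeLinearMap_single φ m c

end AddMonoidAlgebra

theorem Derivation.pow_dvd_apply_pow_mul {R A : Type*} [CommSemiring R] [CommSemiring A]
    [Algebra R A] (δ : Derivation R A A) {a b : A} (hab : a ∣ b) (haδb : a ∣ δ b) (n : ℕ)
    (h : A) : a ^ n ∣ δ (b ^ n * h) := by
  cases n with
  | zero => simp
  | succ n =>
    rw [δ.leibniz, δ.leibniz_pow, Nat.add_sub_cancel, smul_eq_mul, smul_eq_mul, nsmul_eq_mul,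
      smul_eq_mul]
    have hpow : a ^ (n + 1) ∣ b ^ n * δ b :=
      pow_succ a n ▸ mul_dvd_mul (pow_dvd_pow_of_dvd hab n) haδb
    exact dvd_add (dvd_mul_of_dvd_left (pow_dvd_pow_of_dvd hab _) _)
      (dvd_mul_of_dvd_right (dvd_mul_of_dvd_right hpow _) _)

namespace Stmt7

theorem e_mul (a b c d : ℤ) : e a b * e c d = e (a + c) (b + d) := by
  simp [e, AddMonoidAlgebra.single_mul_single]

theorem u_sub_v_eq : u - v = (X - Y) * (1 - e (-1) (-1)) := by
  simp only [u, v, X, Y, mul_sub, sub_mul, mul_one, e_mul]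
  norm_num
  abel

noncomputable def eulerDerivation :
    Derivation ℤ (AddMonoidAlgebra ℤ (ℤ × ℤ)) (AddMonoidAlgebra ℤ (ℤ × ℤ)) :=
  AddMonoidAlgebra.degreeDerivation ((AddMonoidHom.id ℤ).coprod (AddMonoidHom.id ℤ))

theorem D_eq_eulerDerivation : D = eulerDerivation := rfl

theorem eulerDerivation_e (a b : ℤ) : eulerDerivation (e a b) = (a + b) • e a b := by
  simp [eulerDerivation, e]

theorem eulerDerivation_u_sub_v : eulerDerivation (u - v) = (X - Y) * (1 + e (-1) (-1)) := by
  simp only [u, v, X, Y, map_sub, map_add, eulerDerivation_e, mul_add, sub_mul, mul_one, e_mul]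
  norm_num
  abel

/-- in `ℤ[x^{±1}, y^{±1}]` one has `u − v = (x − y)(1 − (xy)^{-1})`;
consequently for any `g ∈ ℤ[u,v]` the element `f = (u − v)²·g` satisfies
`x∂f/∂x + y∂f/∂y ∈ ((x−y)²)`. -/
theorem statement7 :
    u - v = (X - Y) * (1 - e (-1) (-1)) ∧
    ∀ g : MvPolynomial (Fin 2) ℤ,
      D ((u - v) ^ 2 * MvPolynomial.aeval ![u, v] g) ∈ Ideal.span {(X - Y) ^ 2} := by
  refine ⟨u_sub_v_eq, fun g => ?_⟩
  rw [Ideal.mem_span_singleton, D_eq_eulerDerivation]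
  refine eulerDerivation.pow_dvd_apply_pow_mul ?_ ?_ 2 _
  · exact u_sub_v_eq ▸ dvd_mul_right _ _
  · exact eulerDerivation_u_sub_v ▸ dvd_mul_right _ _

end Stmt7
end

section
/- With h̃_k as in the previous context satisfying Σ_{i=0}^n h̃_{k+n−i} a_i = 0 for all k ∈ Z (a_0 = 1, a_n = (−1)^n x_1⋯x_n), for any pairwise distinct integers k_1,…,k_n and any integer l: det(h̃_{k_r + s−1})_{r,s=1}^n · a_n^l = (−1)^{nl} · det(h̃_{k_r + l + s−1})_{r,s=1}^n. -/
/-!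
Write `H_l` for the matrix with rows `(h̃_{k_r + l}, …, h̃_{k_r + l + n - 1})`. The recurrence
expresses `h̃_{m + n}` through `h̃_m, …, h̃_{m + n - 1}`, so `H_{l+1} = H_l C` for the companion
matrix `C` of the recurrence, and `det C = (-1)^n a_n`. As `a_n` is a unit, this propagates in
both directions: `det H_l = ((-1)^n a_n)^l det H_0` for every integer `l`.
-/

theorem eq_mul_zpow_of_map_add_one {M : Type*} [Monoid M] {f : ℤ → M} {w : Mˣ}
    (h : ∀ m, f (m + 1) = f m * w) (m : ℤ) : f m = f 0 * (w ^ m : Mˣ) := by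
  induction m with
  | zero => simp
  | succ p ih => rw [h, ih, zpow_add_one, Units.val_mul, mul_assoc]
  | pred p ih =>
    rw [zpow_sub_one, Units.val_mul, ← mul_assoc, ← ih, Units.eq_mul_inv_iff_mul_eq, ← h,
      sub_add_cancel]

section

variable {R : Type*} [CommRing R]

theorem add_nat_eq_neg_sum_of_recurrence {n : ℕ} {ht : ℤ → R} {a : ℕ → R} (ha0 : a 0 = 1)
    (hrec : ∀ k : ℤ, ∑ i : Fin (n + 1), ht (k + n - i) * a i = 0) (m : ℤ) :
    ht (m + n) = -∑ j : Fin n, ht (m + j) * a (n - j) := by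
  have h := hrec m
  rw [← Equiv.sum_comp Fin.revPerm, Fin.sum_univ_castSucc] at h
  simp only [Fin.revPerm_apply, Fin.val_rev, Fin.val_castSucc, Fin.val_last, Nat.add_sub_add_right,
    Nat.sub_self, Nat.cast_zero, sub_zero, ha0, mul_one] at h
  rw [eq_neg_iff_add_eq_zero, ← h, add_comm]
  congr 2 with j
  rw [Nat.cast_sub j.is_lt.le]
  ring_nf

/-- Right multiplication by this matrix moves every column one place to the left and puts
`-∑ j, a (n - j) • col j` in the last column. -/
def companionMatrix (n : ℕ) (a : ℕ → R) : Matrix (Fin n) (Fin n) R :=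
  Matrix.of fun j s => if (s : ℕ) + 1 = n then -a (n - j) else if (j : ℕ) = s + 1 then 1 else 0

theorem det_companionMatrix {n : ℕ} {a : ℕ → R} (ha0 : a 0 = 1) :
    (companionMatrix n a).det = (-1) ^ n * a n := by
  cases n with
  | zero => simp [ha0]
  | succ m =>
    have hminor : (companionMatrix (m + 1) a).submatrix Fin.succ (Fin.last m).succAbove = 1 := by
      ext i s
      simp [companionMatrix, Matrix.one_apply, Fin.ext_iff, s.is_lt.ne]
    rw [Matrix.det_succ_row_zero, Finset.sum_eq_single (Fin.last m)]
    · rw [hminor]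
      simp [companionMatrix, pow_succ]
    · intro s _ hs
      have hsm : (s : ℕ) ≠ m := fun h => hs (Fin.ext h)
      simp [companionMatrix, hsm]
    · simp

def windowMatrix {n : ℕ} (ht : ℤ → R) (k : Fin n → ℤ) (l : ℤ) : Matrix (Fin n) (Fin n) R :=
  Matrix.of fun r s => ht (k r + l + s)

theorem windowMatrix_add_one {n : ℕ} {ht : ℤ → R} {a : ℕ → R} (ha0 : a 0 = 1)
    (hrec : ∀ k : ℤ, ∑ i : Fin (n + 1), ht (k + n - i) * a i = 0) (k : Fin n → ℤ) (l : ℤ) :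
    windowMatrix ht k (l + 1) = windowMatrix ht k l * companionMatrix n a := by
  ext r s
  simp only [windowMatrix, companionMatrix, Matrix.mul_apply, Matrix.of_apply]
  by_cases hs : (s : ℕ) + 1 = n
  · simp only [if_pos hs, mul_neg, Finset.sum_neg_distrib]
    rw [← add_nat_eq_neg_sum_of_recurrence ha0 hrec]
    congr 1
    omega
  · simp only [if_neg hs, mul_ite, mul_one, mul_zero]
    have hlt : (s : ℕ) + 1 < n := lt_of_le_of_ne s.is_lt hs
    rw [Fintype.sum_eq_single ⟨s + 1, hlt⟩ fun j hj => if_neg fun h => hj (Fin.ext h), if_pos rfl]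
    push_cast
    ring_nf

theorem det_windowMatrix {n : ℕ} {ht : ℤ → R} {a : ℕ → R} (ha0 : a 0 = 1) {un : Rˣ}
    (han : (un : R) = a n) (hrec : ∀ k : ℤ, ∑ i : Fin (n + 1), ht (k + n - i) * a i = 0)
    (k : Fin n → ℤ) (l : ℤ) :
    (windowMatrix ht k l).det = (windowMatrix ht k 0).det * (((-1) ^ n * un) ^ l : Rˣ) := by
  refine eq_mul_zpow_of_map_add_one (f := fun l => (windowMatrix ht k l).det) (fun m => ?_) l
  rw [windowMatrix_add_one ha0 hrec, Matrix.det_mul, det_companionMatrix ha0]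
  simp [han]

end

theorem statement12_general {R : Type*} [CommRing R] (n : ℕ) (ht : ℤ → R) (a : ℕ → R)
    (ha0 : a 0 = 1) (un : Rˣ) (han : (un : R) = a n)
    (hrec : ∀ k : ℤ, ∑ i : Fin (n + 1), ht (k + n - i) * a i = 0)
    (k : Fin n → ℤ) (l : ℤ) :
    Matrix.det (Matrix.of fun r s : Fin n => ht (k r + s)) * ((un ^ l : Rˣ) : R) =
      (((-1 : Rˣ) ^ (n * l) : Rˣ) : R) *
        Matrix.det (Matrix.of fun r s : Fin n => ht (k r + l + s)) := by
  have hw : ((-1) ^ n * un) ^ l = (-1 : Rˣ) ^ (n * l) * un ^ l := by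
    rw [mul_zpow, ← zpow_natCast, ← zpow_mul]
  have hsign : (-1 : Rˣ) ^ (n * l) * (-1) ^ (n * l) = 1 := by
    rw [← mul_zpow, neg_one_mul, neg_neg, one_zpow]
  have hl := det_windowMatrix ha0 han hrec k l
  simp only [windowMatrix, add_zero] at hl
  rw [hl, hw, mul_left_comm, ← Units.val_mul, ← mul_assoc, hsign, one_mul]

/-- let `h̃ : ℤ → R` satisfy the linear recurrence
`Σ_{i=0}^n h̃_{k+n−i}·a_i = 0` for all `k ∈ ℤ`, where `a_0 = 1` and `a_n` is a unit.
Then for any pairwise distinct integers `k_1,…,k_n` and any integer `l`: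
`det(h̃_{k_r+s−1})·a_n^l = (−1)^{nl}·det(h̃_{k_r+l+s−1})` (determinants of `n×n`
matrices, rows `r`, columns `s`). -/
theorem statement12 {R : Type*} [CommRing R] (n : ℕ) (ht : ℤ → R) (a : ℕ → R)
    (ha0 : a 0 = 1) (un : Rˣ) (han : (un : R) = a n)
    (hrec : ∀ k : ℤ, ∑ i : Fin (n + 1), ht (k + n - i) * a i = 0)
    (k : Fin n → ℤ) (hk : Function.Injective k) (l : ℤ) :
    Matrix.det (Matrix.of fun r s : Fin n => ht (k r + s)) * ((un ^ l : Rˣ) : R) =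
      (((-1 : Rˣ) ^ (n * l) : Rˣ) : R) *
        Matrix.det (Matrix.of fun r s : Fin n => ht (k r + l + s)) :=
  statement12_general n ht a ha0 un han hrec k l
end

section
/- Let W be a finite group acting linearly on a complex inner-product space V and on the weight lattice P, let ω ∈ P have a 'small' orbit (meaning for all x, y ∈ Wω with x ≠ ±y, x − y lies in the root system R of W), and let F(ν) = ∏_{α∈R⁺} (ν, α). Suppose φ = Σ_ν φ(ν) e^ν ∈ Z[P] satisfies: Alt(φ) := Σ_{w∈W} ε(w) w(φ) = 0; the support of φ lies in the affine hyperplane (ν, ω) = c with c ≠ 0; and F(ν) ≠ 0 for all ν in the support of φ. Then Alt(φ·e^{tω}) = 0 for every integer t. -/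
open RealInnerProductSpace

namespace Stmt14

variable {V : Type*} [NormedAddCommGroup V] [InnerProductSpace ℝ V] [FiniteDimensional ℝ V]
variable {W : Type*} [Group W] [Fintype W]

/-- the alternation operation `Alt(φ) = Σ_{w∈W} ε(w)·w(φ)` on the group ring `ℤ[V]`,
where `w(e^ν) = e^{wν}`. -/
noncomputable def Alt (ρ : W →* (V ≃ₗᵢ[ℝ] V)) (ε : W →* ℤˣ) (φ : V →₀ ℤ) : V →₀ ℤ :=
  ∑ w : W, (ε w : ℤ) • Finsupp.mapDomain (ρ w) φ

/-! The coefficient of `e^x` in `Alt(φ e^{tω})` is `Σ_w ε(w) φ(w⁻¹(x − t • wω))`; group its terms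
by `a = wω`, so that the shift `x − t • a` is constant on each group. If `φ(w⁻¹y)` and `φ(w'⁻¹y)`
are both nonzero, then `y` lies on the two hyperplanes `⟪·, wω⟫ = c` and `⟪·, w'ω⟫ = c` and is
orthogonal to no root, so smallness of the orbit forces `wω = w'ω`. Hence each group sums to the
whole of `Alt(φ)(x − t • a) = 0`. -/

section

variable {E : Type*} [NormedAddCommGroup E] [InnerProductSpace ℝ E] {G : Type*} [Group G]
  {R Rp : Finset E}

theorem inner_ne_zero_of_prod_inner_ne_zero (hpm : ∀ α ∈ R, α ∈ Rp ∨ -α ∈ Rp) {ν : E}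
    (hν : ∏ α ∈ Rp, ⟪ν, α⟫ ≠ 0) : ∀ α ∈ R, ⟪ν, α⟫ ≠ 0 := by
  intro α hα hzero
  rcases hpm α hα with hpos | hneg
  · exact hν (Finset.prod_eq_zero hpos hzero)
  · exact hν (Finset.prod_eq_zero hneg (by rw [inner_neg_right, hzero, neg_zero]))

theorem inner_apply_ne_zero (ρ : G →* (E ≃ₗᵢ[ℝ] E))
    (hRW : ∀ g : G, ∀ α ∈ R, ρ g α ∈ R) {ν : E} (hν : ∀ α ∈ R, ⟪ν, α⟫ ≠ 0) (g : G) :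
    ∀ α ∈ R, ⟪ρ g ν, α⟫ ≠ 0 := by
  intro α hα
  have hsymm : (ρ g).symm α = ρ g⁻¹ α := by rw [map_inv, LinearIsometryEquiv.inv_def]
  rw [(ρ g).inner_map_eq_flip, hsymm]
  exact hν _ (hRW _ _ hα)

theorem eq_of_inner_eq_of_sub_mem {x y v : E} {c : ℝ} (hc : c ≠ 0) (hx : ⟪v, x⟫ = c)
    (hy : ⟪v, y⟫ = c) (hv : ∀ α ∈ R, ⟪v, α⟫ ≠ 0) (hxy : x ≠ y → x ≠ -y → x - y ∈ R) :
    x = y := by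
  by_contra hne
  by_cases hneg : x = -y
  · rw [hneg, inner_neg_right, hy] at hx
    exact hc (by linarith)
  · exact hv _ (hxy hne hneg) (by rw [inner_sub_right, hx, hy, sub_self])

theorem apply_eq_of_apply_symm_mem_support (ρ : G →* (E ≃ₗᵢ[ℝ] E))
    (hpm : ∀ α ∈ R, α ∈ Rp ∨ -α ∈ Rp) (hRW : ∀ g : G, ∀ α ∈ R, ρ g α ∈ R) {ω : E}
    (hsmall : ∀ x y : E, (∃ g : G, ρ g ω = x) → (∃ g : G, ρ g ω = y) →
      x ≠ y → x ≠ -y → x - y ∈ R)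
    {φ : E →₀ ℤ} {c : ℝ} (hc : c ≠ 0) (hhyp : ∀ ν ∈ φ.support, ⟪ν, ω⟫ = c)
    (hF : ∀ ν ∈ φ.support, (∏ α ∈ Rp, ⟪ν, α⟫) ≠ 0) {y : E} {g g' : G}
    (hg : φ ((ρ g).symm y) ≠ 0) (hg' : φ ((ρ g').symm y) ≠ 0) : ρ g ω = ρ g' ω := by
  have hinner : ∀ h : G, φ ((ρ h).symm y) ≠ 0 → ⟪y, ρ h ω⟫ = c := fun h hh => by
    rw [← (ρ h).apply_symm_apply y, (ρ h).inner_map_map]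
    exact hhyp _ (Finsupp.mem_support_iff.2 hh)
  have hregular : ∀ α ∈ R, ⟪y, α⟫ ≠ 0 := by
    have := inner_apply_ne_zero ρ hRW
      (inner_ne_zero_of_prod_inner_ne_zero hpm (hF _ (Finsupp.mem_support_iff.2 hg))) g
    rwa [(ρ g).apply_symm_apply] at this
  exact eq_of_inner_eq_of_sub_mem hc (hinner g hg) (hinner g' hg') hregular
    (hsmall _ _ ⟨g, rfl⟩ ⟨g', rfl⟩)

theorem Alt_apply [Fintype G] (ρ : G →* (E ≃ₗᵢ[ℝ] E)) (ε : G →* ℤˣ) (χ : E →₀ ℤ) (y : E) :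
    Alt ρ ε χ y = ∑ g : G, (ε g : ℤ) * χ ((ρ g).symm y) := by
  rw [Alt, Finsupp.finsetSum_apply]
  refine Finset.sum_congr rfl fun g _ => ?_
  rw [Finsupp.smul_apply, smul_eq_mul, ← (ρ g).apply_symm_apply y,
    Finsupp.mapDomain_apply (ρ g).injective, (ρ g).apply_symm_apply]

end

theorem sum_filter_eq_zero_of_support_in_fiber {ι β M : Type*} [Fintype ι] [DecidableEq β]
    [AddCommMonoid M] {f : ι → M} (g : ι → β) (hf : ∑ i, f i = 0)
    (hg : ∀ i j, f i ≠ 0 → f j ≠ 0 → g i = g j) (b : β) : ∑ i with g i = b, f i = 0 := by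
  by_cases h : ∃ i, g i = b ∧ f i ≠ 0
  · obtain ⟨i₀, hi₀b, hi₀⟩ := h
    rw [← hf]
    refine Finset.sum_subset (Finset.subset_univ _) fun i _ hi => ?_
    by_contra hfi
    exact hi (Finset.mem_filter.2 ⟨Finset.mem_univ i, (hg i i₀ hfi hi₀).trans hi₀b⟩)
  · push Not at h
    exact Finset.sum_eq_zero fun i hi => h i (Finset.mem_filter.1 hi).2

theorem mapDomain_add_right_apply {A M : Type*} [AddCommGroup A] [AddCommMonoid M]
    (χ : A →₀ M) (a x : A) : Finsupp.mapDomain (fun u => u + a) χ x = χ (x - a) := by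
  conv_lhs => rw [← sub_add_cancel x a]
  exact Finsupp.mapDomain_apply (add_left_injective a) χ (x - a)

theorem statement14_general
    (ρ : W →* (V ≃ₗᵢ[ℝ] V)) (R Rp : Finset V)
    (hpm : ∀ α ∈ R, α ∈ Rp ∨ -α ∈ Rp)
    (hRW : ∀ (w : W), ∀ α ∈ R, ρ w α ∈ R)
    (ε : W →* ℤˣ)
    (ω : V)
    (hsmall : ∀ x y : V, (∃ w : W, ρ w ω = x) → (∃ w : W, ρ w ω = y) →
      x ≠ y → x ≠ -y → x - y ∈ R)
    (φ : V →₀ ℤ)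
    (c : ℝ) (hc : c ≠ 0)
    (hhyp : ∀ ν ∈ φ.support, ⟪ν, ω⟫ = c)
    (hF : ∀ ν ∈ φ.support, (∏ α ∈ Rp, ⟪ν, α⟫) ≠ 0)
    (hAlt : Alt ρ ε φ = 0) :
    ∀ t : ℤ, Alt ρ ε (Finsupp.mapDomain (fun v => v + t • ω) φ) = 0 := by
  classical
  intro t
  ext x
  have hfiber : ∀ a y : V, ∑ w with ρ w ω = a, (ε w : ℤ) * φ ((ρ w).symm y) = 0 :=
    fun a y => sum_filter_eq_zero_of_support_in_fiber _
      (by rw [← Alt_apply, hAlt, Finsupp.coe_zero, Pi.zero_apply])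
      (fun w w' hw hw' => apply_eq_of_apply_symm_mem_support ρ hpm hRW hsmall hc hhyp hF
        (right_ne_zero_of_mul hw) (right_ne_zero_of_mul hw')) a
  rw [Alt_apply, Finsupp.coe_zero, Pi.zero_apply,
    ← Finset.sum_fiberwise_of_maps_to (g := fun w => ρ w ω)
      (fun w _ => Finset.mem_image_of_mem _ (Finset.mem_univ w))]
  refine Finset.sum_eq_zero fun a _ => ?_
  rw [← hfiber a (x - t • a)]
  refine Finset.sum_congr rfl fun w hw => ?_
  rw [mapDomain_add_right_apply, ← (Finset.mem_filter.1 hw).2, map_sub (ρ w).symm,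
    map_zsmul (ρ w).symm, LinearIsometryEquiv.symm_apply_apply]

/-- let `W` be a finite reflection group on a real inner-product space `V`
with `W`-stable root system `R`, positive roots `R⁺`, sign character `ε`, and `W`-stable
weight lattice `P`.  Suppose `ω ∈ P` has a small orbit (`x, y ∈ Wω`, `x ≠ ±y` implies
`x − y ∈ R`).  If `φ ∈ ℤ[P]` satisfies `Alt(φ) = 0`, its support lies in the affine
hyperplane `(ν,ω) = c` with `c ≠ 0`, and `F(ν) = ∏_{α∈R⁺}(ν,α) ≠ 0` on the support,
then `Alt(φ·e^{tω}) = 0` for every integer `t`. -/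
theorem statement14
    (ρ : W →* (V ≃ₗᵢ[ℝ] V)) (R Rp : Finset V)
    (hRpR : Rp ⊆ R)
    (hpm : ∀ α ∈ R, α ∈ Rp ∨ -α ∈ Rp)
    (hRW : ∀ (w : W), ∀ α ∈ R, ρ w α ∈ R)
    (hgen : Subgroup.closure
      {w : W | ∃ α ∈ Rp, ρ w = (Submodule.reflection (ℝ ∙ α)ᗮ : V ≃ₗᵢ[ℝ] V)} = (⊤ : Subgroup W))
    (ε : W →* ℤˣ)
    (hε : ∀ (w : W), ∀ α ∈ Rp, ρ w = (Submodule.reflection (ℝ ∙ α)ᗮ : V ≃ₗᵢ[ℝ] V) → ε w = -1)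
    (P : AddSubgroup V) (hPW : ∀ (w : W), ∀ p ∈ P, ρ w p ∈ P)
    (ω : V) (hω : ω ∈ P)
    (hsmall : ∀ x y : V, (∃ w : W, ρ w ω = x) → (∃ w : W, ρ w ω = y) →
      x ≠ y → x ≠ -y → x - y ∈ R)
    (φ : V →₀ ℤ) (hφP : ∀ ν ∈ φ.support, ν ∈ P)
    (c : ℝ) (hc : c ≠ 0)
    (hhyp : ∀ ν ∈ φ.support, ⟪ν, ω⟫ = c)
    (hF : ∀ ν ∈ φ.support, (∏ α ∈ Rp, ⟪ν, α⟫) ≠ 0)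
    (hAlt : Alt ρ ε φ = 0) :
    ∀ t : ℤ, Alt ρ ε (Finsupp.mapDomain (fun v => v + t • ω) φ) = 0 :=
  statement14_general ρ R Rp hpm hRW ε ω hsmall φ c hc hhyp hF hAlt

end Stmt14
end

section
/- Let g(h,α) be the Lie superalgebra with even part a finite-dimensional abelian Lie algebra h, odd part spanned by X, Y, subject to [h,X] = α(h)X, [h,Y] = −α(h)Y, [X,X] = [Y,Y] = 0, [X,Y] = H, where H ∈ h, α ∈ h* is nonzero, and α(H) = 0. Then every finite-dimensional irreducible g(h,α)-module V with highest weight λ (i.e., with a vector v satisfying Xv = 0, hv = λ(h)v) is: one-dimensional with supercharacter e^λ if λ(H) = 0, and two-dimensional with supercharacter e^λ − e^{λ−α} if λ(H) ≠ 0. -/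
open scoped Classical

namespace Stmt15

open Module

variable {hL : Type*} [AddCommGroup hL] [Module ℂ hL]
variable {V : Type*} [AddCommGroup V] [Module ℂ V]

/-- the weight space `V_μ = {u : ρ(h)u = μ(h)u for all h}`. -/
noncomputable def wt (ρ : hL →ₗ[ℂ] Module.End ℂ V) (μ : hL →ₗ[ℂ] ℂ) : Submodule ℂ V :=
  ⨅ h : hL, LinearMap.ker (ρ h - μ h • (LinearMap.id : Module.End ℂ V))

/-- the even part of `V` with respect to the grading involution `gr`. -/
noncomputable def evenPart (gr : Module.End ℂ V) : Submodule ℂ V :=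
  LinearMap.ker (gr - LinearMap.id)

/-- the odd part of `V` with respect to the grading involution `gr`. -/
noncomputable def oddPart (gr : Module.End ℂ V) : Submodule ℂ V :=
  LinearMap.ker (gr + LinearMap.id)

/-- the coefficient `sdim V_μ` of the supercharacter at `e^μ`. -/
noncomputable def sdimWt (gr : Module.End ℂ V) (ρ : hL →ₗ[ℂ] Module.End ℂ V)
    (μ : hL →ₗ[ℂ] ℂ) : ℤ :=
  (finrank ℂ (wt ρ μ ⊓ evenPart gr : Submodule ℂ V) : ℤ) -
    (finrank ℂ (wt ρ μ ⊓ oddPart gr : Submodule ℂ V) : ℤ)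

/-!
Let `v` be the even highest weight vector and `w := Y v`. Then `w` is odd of weight `λ - α`,
`X w = λ(H) v` and `Y w = 0`, so `span {v, w}` is a graded submodule and equals `V` by
irreducibility. If `λ(H) = 0`, then `span {w}` is a graded submodule too; it cannot be `V`,
which contains the even vector `v`, so `w = 0`. If `λ(H) ≠ 0`, then `X w ≠ 0`, so `w ≠ 0`.
In both cases `V = ℂ v ⊕ ℂ w` is the splitting into even and odd parts, and it is also a
splitting into weight spaces, from which the dimension and the supercharacter are read off.
-/

theorem eq_of_le_of_sup_eq_top_of_disjoint {α : Type*} [Lattice α] [BoundedOrder α]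
    [IsModularLattice α] {a b e o : α} (hae : a ≤ e) (hbo : b ≤ o) (hab : a ⊔ b = ⊤)
    (heo : Disjoint e o) : e = a := by
  calc e = (a ⊔ b) ⊓ e := by rw [hab, top_inf_eq]
    _ = a ⊔ b ⊓ e := sup_inf_assoc_of_le b hae
    _ = a := by rw [(heo.symm.mono_left hbo).eq_bot, sup_bot_eq]

theorem Submodule.apply_mem_span_of_forall {R M : Type*} [Semiring R] [AddCommMonoid M]
    [Module R M] {T : M →ₗ[R] M} {s : Set M} (hT : ∀ x ∈ s, T x ∈ Submodule.span R s) :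
    ∀ u ∈ Submodule.span R s, T u ∈ Submodule.span R s :=
  fun _ hu => Submodule.span_le (p := (Submodule.span R s).comap T) |>.mpr hT hu

theorem mem_wt {ρ : hL →ₗ[ℂ] Module.End ℂ V} {μ : hL →ₗ[ℂ] ℂ} {u : V} :
    u ∈ wt ρ μ ↔ ∀ h, ρ h u = μ h • u := by
  simp [wt, sub_eq_zero]

theorem mem_evenPart {gr : Module.End ℂ V} {u : V} : u ∈ evenPart gr ↔ gr u = u := by
  simp [evenPart, sub_eq_zero]

theorem mem_oddPart {gr : Module.End ℂ V} {u : V} : u ∈ oddPart gr ↔ gr u = -u := by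
  simp [oddPart, add_eq_zero_iff_eq_neg]

theorem disjoint_wt {ρ : hL →ₗ[ℂ] Module.End ℂ V} {μ ν : hL →ₗ[ℂ] ℂ} (hne : μ ≠ ν) :
    Disjoint (wt ρ μ) (wt ρ ν) := by
  obtain ⟨h, hh⟩ : ∃ h, μ h ≠ ν h := by
    by_contra! heq
    exact hne (LinearMap.ext heq)
  refine Submodule.disjoint_def.mpr fun u hμ hν => ?_
  have : (μ h - ν h) • u = 0 := by
    rw [sub_smul, ← mem_wt.mp hμ h, ← mem_wt.mp hν h, sub_self]
  exact (smul_eq_zero.mp this).resolve_left (sub_ne_zero.mpr hh)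

theorem finrank_wt_inf_of_le {ρ : hL →ₗ[ℂ] Module.End ℂ V} {μ : hL →ₗ[ℂ] ℂ}
    {S : Submodule ℂ V} (hS : S ≤ wt ρ μ) (ν : hL →ₗ[ℂ] ℂ) :
    finrank ℂ (wt ρ ν ⊓ S : Submodule ℂ V) = if ν = μ then finrank ℂ S else 0 := by
  split_ifs with h
  · rw [h, inf_eq_right.mpr hS]
  · rw [((disjoint_wt h).mono_right hS).eq_bot, finrank_bot]

theorem disjoint_evenPart_oddPart (gr : Module.End ℂ V) :
    Disjoint (evenPart gr) (oddPart gr) :=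
  have := IsAddTorsionFree.of_isTorsionFree ℂ V
  Submodule.disjoint_def.mpr fun _ he ho =>
    self_eq_neg.mp ((mem_evenPart.mp he).symm.trans (mem_oddPart.mp ho))

section SpanPair

variable {gr : Module.End ℂ V} {v w : V}

theorem span_singleton_sup_eq_top (hspan : Submodule.span ℂ {v, w} = ⊤) :
    ℂ ∙ v ⊔ ℂ ∙ w = ⊤ := by
  rw [← hspan, Submodule.span_insert]

theorem evenPart_eq_span (hv : v ∈ evenPart gr) (hw : w ∈ oddPart gr)
    (hspan : Submodule.span ℂ {v, w} = ⊤) : evenPart gr = ℂ ∙ v :=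
  eq_of_le_of_sup_eq_top_of_disjoint
    ((Submodule.span_singleton_le_iff_mem _ _).mpr hv)
    ((Submodule.span_singleton_le_iff_mem _ _).mpr hw)
    (span_singleton_sup_eq_top hspan) (disjoint_evenPart_oddPart gr)

theorem oddPart_eq_span (hv : v ∈ evenPart gr) (hw : w ∈ oddPart gr)
    (hspan : Submodule.span ℂ {v, w} = ⊤) : oddPart gr = ℂ ∙ w :=
  eq_of_le_of_sup_eq_top_of_disjoint
    ((Submodule.span_singleton_le_iff_mem _ _).mpr hw)
    ((Submodule.span_singleton_le_iff_mem _ _).mpr hv)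
    (by rw [sup_comm, span_singleton_sup_eq_top hspan]) (disjoint_evenPart_oddPart gr).symm

theorem finrank_eq_of_span_pair (hv : v ∈ evenPart gr) (hw : w ∈ oddPart gr)
    (hspan : Submodule.span ℂ {v, w} = ⊤) :
    finrank ℂ V = finrank ℂ (ℂ ∙ v) + finrank ℂ (ℂ ∙ w) := by
  have hdisj : ℂ ∙ v ⊓ ℂ ∙ w = ⊥ := by
    rw [← evenPart_eq_span hv hw hspan, ← oddPart_eq_span hv hw hspan]
    exact (disjoint_evenPart_oddPart gr).eq_bot
  rw [← Submodule.finrank_sup_add_finrank_inf_eq, hdisj, span_singleton_sup_eq_top hspan,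
    finrank_top, finrank_bot, add_zero]

theorem sdimWt_eq_of_span_pair {ρ : hL →ₗ[ℂ] Module.End ℂ V} {μv μw : hL →ₗ[ℂ] ℂ}
    (hv : v ∈ evenPart gr) (hw : w ∈ oddPart gr) (hspan : Submodule.span ℂ {v, w} = ⊤)
    (hvμ : v ∈ wt ρ μv) (hwμ : w ∈ wt ρ μw) (μ : hL →ₗ[ℂ] ℂ) :
    sdimWt gr ρ μ = (if μ = μv then (finrank ℂ (ℂ ∙ v) : ℤ) else 0) -
      (if μ = μw then (finrank ℂ (ℂ ∙ w) : ℤ) else 0) := by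
  rw [sdimWt, evenPart_eq_span hv hw hspan, oddPart_eq_span hv hw hspan,
    finrank_wt_inf_of_le ((Submodule.span_singleton_le_iff_mem _ _).mpr hvμ),
    finrank_wt_inf_of_le ((Submodule.span_singleton_le_iff_mem _ _).mpr hwμ)]
  simp only [Nat.cast_ite, Nat.cast_zero]

end SpanPair

theorem apply_mem_oddPart {gr T : Module.End ℂ V} (hT : T * gr = -(gr * T)) {u : V}
    (hu : u ∈ evenPart gr) : T u ∈ oddPart gr := by
  have := LinearMap.congr_fun hT u
  rw [Module.End.mul_apply, mem_evenPart.mp hu] at this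
  exact mem_oddPart.mpr (neg_eq_iff_eq_neg.mpr this).symm

theorem apply_mem_wt {ρ : hL →ₗ[ℂ] Module.End ℂ V} {T : Module.End ℂ V}
    {β μ : hL →ₗ[ℂ] ℂ} (hT : ∀ h, ρ h * T - T * ρ h = β h • T) {u : V} (hu : u ∈ wt ρ μ) :
    T u ∈ wt ρ (μ + β) := by
  refine mem_wt.mpr fun h => ?_
  have := LinearMap.congr_fun (hT h) u
  rw [LinearMap.sub_apply, Module.End.mul_apply, Module.End.mul_apply, mem_wt.mp hu h,
    map_smul, sub_eq_iff_eq_add] at this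
  rw [this, LinearMap.smul_apply, LinearMap.add_apply, add_smul, add_comm]

def IsGradedIrreducible (gr : Module.End ℂ V) (ρ : hL →ₗ[ℂ] Module.End ℂ V)
    (Xop Yop : Module.End ℂ V) : Prop :=
  ∀ U : Submodule ℂ V, (∀ u ∈ U, gr u ∈ U) → (∀ h : hL, ∀ u ∈ U, ρ h u ∈ U) →
    (∀ u ∈ U, Xop u ∈ U) → (∀ u ∈ U, Yop u ∈ U) → U = ⊥ ∨ U = ⊤

section Irreducible

variable {gr : Module.End ℂ V} {ρ : hL →ₗ[ℂ] Module.End ℂ V} {Xop Yop : Module.End ℂ V}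
  {v w : V} {μv μw : hL →ₗ[ℂ] ℂ}

theorem IsGradedIrreducible.span_pair_eq_top (hirr : IsGradedIrreducible gr ρ Xop Yop)
    (hv : v ≠ 0) (hv_even : v ∈ evenPart gr) (hw_odd : w ∈ oddPart gr) (hv_wt : v ∈ wt ρ μv)
    (hw_wt : w ∈ wt ρ μw) {c : ℂ} (hXv : Xop v = 0) (hXw : Xop w = c • v) (hYv : Yop v = w)
    (hYw : Yop w = 0) : Submodule.span ℂ {v, w} = ⊤ := by
  have invariant : ∀ T : Module.End ℂ V, (∃ a b : ℂ, a • v + b • w = T v) →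
      (∃ a b : ℂ, a • v + b • w = T w) →
      ∀ u ∈ Submodule.span ℂ {v, w}, T u ∈ Submodule.span ℂ {v, w} :=
    fun T hTv hTw => Submodule.apply_mem_span_of_forall <| by
      rintro x (rfl | rfl) <;> exact Submodule.mem_span_pair.mpr ‹_›
  refine (hirr _ (invariant gr ?_ ?_) (fun h => invariant (ρ h) ?_ ?_) (invariant Xop ?_ ?_)
    (invariant Yop ?_ ?_)).resolve_left fun hbot => hv ?_
  · exact ⟨1, 0, by simp [mem_evenPart.mp hv_even]⟩
  · exact ⟨0, -1, by simp [mem_oddPart.mp hw_odd]⟩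
  · exact ⟨μv h, 0, by simp [mem_wt.mp hv_wt]⟩
  · exact ⟨0, μw h, by simp [mem_wt.mp hw_wt]⟩
  · exact ⟨0, 0, by simp [hXv]⟩
  · exact ⟨c, 0, by simp [hXw]⟩
  · exact ⟨0, 1, by simp [hYv]⟩
  · exact ⟨0, 0, by simp [hYw]⟩
  · exact (Submodule.mem_bot ℂ).mp (hbot ▸ Submodule.subset_span (by simp))

theorem IsGradedIrreducible.eq_zero_of_span_pair_eq_top
    (hirr : IsGradedIrreducible gr ρ Xop Yop) (hv : v ≠ 0) (hv_even : v ∈ evenPart gr)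
    (hw_odd : w ∈ oddPart gr) (hw_wt : w ∈ wt ρ μw) (hXw : Xop w = 0) (hYw : Yop w = 0)
    (hspan : Submodule.span ℂ {v, w} = ⊤) : w = 0 := by
  have invariant : ∀ T : Module.End ℂ V, (∃ c : ℂ, c • w = T w) →
      ∀ u ∈ ℂ ∙ w, T u ∈ ℂ ∙ w :=
    fun T hT => Submodule.apply_mem_span_of_forall <| by
      rintro x rfl; exact Submodule.mem_span_singleton.mpr hT
  rcases hirr _ (invariant gr ⟨-1, by simp [mem_oddPart.mp hw_odd]⟩)
    (fun h => invariant (ρ h) ⟨μw h, (mem_wt.mp hw_wt h).symm⟩)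
    (invariant Xop ⟨0, by simp [hXw]⟩) (invariant Yop ⟨0, by simp [hYw]⟩) with hbot | htop
  · exact Submodule.span_singleton_eq_bot.mp hbot
  · rw [← oddPart_eq_span hv_even hw_odd hspan] at htop
    exact absurd (Submodule.disjoint_def.mp (disjoint_evenPart_oddPart gr) v hv_even
      (htop ▸ Submodule.mem_top)) hv

end Irreducible

theorem statement15_general
    (α : hL →ₗ[ℂ] ℂ) (hα : α ≠ 0) (H : hL)
    (gr : Module.End ℂ V)
    (ρ : hL →ₗ[ℂ] Module.End ℂ V) (Xop Yop : Module.End ℂ V)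
    -- X, Y are odd
    (hYodd : Yop * gr = -(gr * Yop))
    -- the bracket relations of g(h,α)
    (hHY : ∀ h : hL, ρ h * Yop - Yop * ρ h = -(α h) • Yop)
    (hYY : Yop * Yop = 0)
    (hXY : Xop * Yop + Yop * Xop = ρ H)
    -- V is an irreducible graded module
    (hirr : ∀ U : Submodule ℂ V, (∀ u ∈ U, gr u ∈ U) → (∀ h : hL, ∀ u ∈ U, ρ h u ∈ U) →
      (∀ u ∈ U, Xop u ∈ U) → (∀ u ∈ U, Yop u ∈ U) → U = ⊥ ∨ U = ⊤)
    -- highest weight vector of weight λ, taken even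
    (lam : hL →ₗ[ℂ] ℂ) (v : V) (hv : v ≠ 0) (hvev : gr v = v)
    (hXv : Xop v = 0) (hwt : ∀ h : hL, ρ h v = lam h • v) :
    (lam H = 0 →
      finrank ℂ V = 1 ∧
        ∀ μ : hL →ₗ[ℂ] ℂ, sdimWt gr ρ μ = if μ = lam then 1 else 0) ∧
    (lam H ≠ 0 →
      finrank ℂ V = 2 ∧
        ∀ μ : hL →ₗ[ℂ] ℂ, sdimWt gr ρ μ =
          if μ = lam then 1 else if μ = lam - α then -1 else 0) := by
  have hv_even : v ∈ evenPart gr := mem_evenPart.mpr hvev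
  have hv_wt : v ∈ wt ρ lam := mem_wt.mpr hwt
  set w := Yop v
  have hw_odd : w ∈ oddPart gr := apply_mem_oddPart hYodd hv_even
  have hw_wt : w ∈ wt ρ (lam - α) := sub_eq_add_neg lam α ▸ apply_mem_wt (β := -α) hHY hv_wt
  have hXw : Xop w = lam H • v := by simpa [hXv, hwt] using LinearMap.congr_fun hXY v
  have hYw : Yop w = 0 := LinearMap.congr_fun hYY v
  have hspan : Submodule.span ℂ {v, w} = ⊤ :=
    IsGradedIrreducible.span_pair_eq_top hirr hv hv_even hw_odd hv_wt hw_wt hXv hXw rfl hYw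
  refine ⟨fun hlam => ?_, fun hlam => ?_⟩
  · have hw0 : w = 0 := IsGradedIrreducible.eq_zero_of_span_pair_eq_top hirr hv hv_even hw_odd
      hw_wt (by rw [hXw, hlam, zero_smul]) hYw hspan
    refine ⟨?_, fun μ => ?_⟩
    · rw [finrank_eq_of_span_pair hv_even hw_odd hspan, hw0]
      simp [finrank_span_singleton hv]
    · rw [sdimWt_eq_of_span_pair hv_even hw_odd hspan hv_wt hw_wt, hw0]
      simp [finrank_span_singleton hv]
  · have hw0 : w ≠ 0 := by
      intro hw0
      have : lam H • v = 0 := by rw [← hXw, hw0, map_zero]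
      exact hv ((smul_eq_zero.mp this).resolve_left hlam)
    have hne : lam ≠ lam - α := fun h => hα (sub_eq_self.mp h.symm)
    refine ⟨?_, fun μ => ?_⟩
    · rw [finrank_eq_of_span_pair hv_even hw_odd hspan, finrank_span_singleton hv,
        finrank_span_singleton hw0]
    · rw [sdimWt_eq_of_span_pair hv_even hw_odd hspan hv_wt hw_wt, finrank_span_singleton hv,
        finrank_span_singleton hw0]
      split_ifs <;> simp_all

/-- let `g(h,α)` be the solvable Lie superalgebra with abelian even part `h`,
odd part spanned by `X, Y`, relations `[h,X] = α(h)X`, `[h,Y] = −α(h)Y`,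
`[X,X] = [Y,Y] = 0`, `[X,Y] = H`, where `α ≠ 0` and `α(H) = 0`.  Every
finite-dimensional (graded-)irreducible `g(h,α)`-module `V` with highest weight `λ`
(an even vector `v ≠ 0` with `Xv = 0`, `hv = λ(h)v`) is:
one-dimensional with supercharacter `e^λ` if `λ(H) = 0`, and two-dimensional with
supercharacter `e^λ − e^{λ−α}` if `λ(H) ≠ 0`. -/
theorem statement15 [FiniteDimensional ℂ V]
    (α : hL →ₗ[ℂ] ℂ) (hα : α ≠ 0) (H : hL) (hαH : α H = 0)
    (gr : Module.End ℂ V) (hgr : gr * gr = 1)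
    (ρ : hL →ₗ[ℂ] Module.End ℂ V) (Xop Yop : Module.End ℂ V)
    -- h acts as an abelian Lie algebra of even operators
    (hcomm : ∀ h₁ h₂ : hL, ρ h₁ * ρ h₂ = ρ h₂ * ρ h₁)
    (hρeven : ∀ h : hL, ρ h * gr = gr * ρ h)
    -- X, Y are odd
    (hXodd : Xop * gr = -(gr * Xop)) (hYodd : Yop * gr = -(gr * Yop))
    -- the bracket relations of g(h,α)
    (hHX : ∀ h : hL, ρ h * Xop - Xop * ρ h = α h • Xop)
    (hHY : ∀ h : hL, ρ h * Yop - Yop * ρ h = -(α h) • Yop)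
    (hXX : Xop * Xop = 0) (hYY : Yop * Yop = 0)
    (hXY : Xop * Yop + Yop * Xop = ρ H)
    -- V is an irreducible graded module
    (hirr : ∀ U : Submodule ℂ V, (∀ u ∈ U, gr u ∈ U) → (∀ h : hL, ∀ u ∈ U, ρ h u ∈ U) →
      (∀ u ∈ U, Xop u ∈ U) → (∀ u ∈ U, Yop u ∈ U) → U = ⊥ ∨ U = ⊤)
    -- highest weight vector of weight λ, taken even
    (lam : hL →ₗ[ℂ] ℂ) (v : V) (hv : v ≠ 0) (hvev : gr v = v)
    (hXv : Xop v = 0) (hwt : ∀ h : hL, ρ h v = lam h • v) :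
    (lam H = 0 →
      finrank ℂ V = 1 ∧
        ∀ μ : hL →ₗ[ℂ] ℂ, sdimWt gr ρ μ = if μ = lam then 1 else 0) ∧
    (lam H ≠ 0 →
      finrank ℂ V = 2 ∧
        ∀ μ : hL →ₗ[ℂ] ℂ, sdimWt gr ρ μ =
          if μ = lam then 1 else if μ = lam - α then -1 else 0) :=
  statement15_general α hα H gr ρ Xop Yop hYodd hHY hYY hXY hirr lam v hv hvev hXv hwt

end Stmt15
end

section
/- Let f ∈ (x_1⋯x_m)^{1/2}·Z[x_1^{±1},…,x_m^{±1}, y_1^{±1},…,y_n^{±1}] be a Laurent polynomial whose exponents of each x_i all lie in Z + 1/2, and suppose x_1·∂f/∂x_1 + y_1·∂f/∂y_1 lies in the ideal (x_1 − y_1). Then f is divisible by (x_1 − y_1). -/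
namespace Stmt17

/-- exponent group for `t = x₁^{1/2}`, `y₁`, and the remaining variables. -/
abbrev M (k : ℕ) := ℤ × ℤ × (Fin k → ℤ)

/-- `x₁ − y₁ = t² − y₁` as an element of the Laurent ring with integer coefficients. -/
noncomputable def gen (k : ℕ) : AddMonoidAlgebra ℤ (M k) :=
  AddMonoidAlgebra.single (2, 0, 0) 1 - AddMonoidAlgebra.single (0, 1, 0) 1

/-- same generator with rational coefficients. -/
noncomputable def genQ (k : ℕ) : AddMonoidAlgebra ℚ (M k) :=
  AddMonoidAlgebra.single (2, 0, 0) 1 - AddMonoidAlgebra.single (0, 1, 0) 1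

/-- the Euler operator `x₁∂/∂x₁ + y₁∂/∂y₁`: on a monomial `x₁^i y₁^j` (with
`i = m.1/2 ∈ ℤ + 1/2`) it acts by the scalar `i + j`. -/
noncomputable def D (k : ℕ) (f : AddMonoidAlgebra ℚ (M k)) : AddMonoidAlgebra ℚ (M k) :=
  Finsupp.sum f.coeff fun m c => AddMonoidAlgebra.single m (((m.1 : ℚ) / 2 + (m.2.1 : ℚ)) * c)

/-- the grading group homomorphism whose kernel is generated by `(2,-1,0)`. -/
def gh (k : ℕ) : M k →+ ℤ × (Fin k → ℤ) where
  toFun m := (m.1 + 2 * m.2.1, m.2.2)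
  map_zero' := by simp
  map_add' a b := Prod.ext (by simp only [Prod.fst_add, Prod.snd_add]; ring) rfl

lemma mapDomain_sub' {α β N : Type*} [AddCommGroup N] (g : α → β) (a b : α →₀ N) :
    Finsupp.mapDomain g (a - b) = Finsupp.mapDomain g a - Finsupp.mapDomain g b :=
  map_sub (Finsupp.mapDomain.addMonoidHom g) a b

lemma base_mem (k : ℕ) :
    (AddMonoidAlgebra.single ((2, -1, 0) : M k) (1 : ℤ) - 1) ∈ Ideal.span {gen k} := by
  rw [Ideal.mem_span_singleton']
  refine ⟨AddMonoidAlgebra.single ((0, -1, 0) : M k) 1, ?_⟩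
  rw [gen, mul_sub, AddMonoidAlgebra.single_mul_single, AddMonoidAlgebra.single_mul_single,
    AddMonoidAlgebra.one_def]
  norm_num
  rfl

lemma step_eq (k : ℕ) (a : M k) :
    AddMonoidAlgebra.single (a + ((2, -1, 0) : M k)) (1 : ℤ) - 1
      = AddMonoidAlgebra.single a 1 *
          (AddMonoidAlgebra.single ((2, -1, 0) : M k) 1 - 1) +
        (AddMonoidAlgebra.single a (1 : ℤ) - 1) := by
  rw [mul_sub, AddMonoidAlgebra.single_mul_single, mul_one, mul_one]
  ring

lemma pow_mem (k : ℕ) (t : ℤ) :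
    (AddMonoidAlgebra.single ((2 * t, -t, 0) : M k) (1 : ℤ) - 1) ∈ Ideal.span {gen k} := by
  induction t using Int.induction_on with
  | zero =>
      simp [AddMonoidAlgebra.one_def]
      rw [show ((0, 0, 0) : M k) = 0 from rfl, sub_self]
      exact zero_mem _
  | succ n ih =>
      have hadd : ((2 * ((n : ℤ) + 1), -((n : ℤ) + 1), 0) : M k)
          = (2 * (n : ℤ), -(n : ℤ), 0) + (2, -1, 0) := by
        refine Prod.ext ?_ (Prod.ext ?_ ?_) <;> simp <;> ring
      rw [hadd, step_eq]
      exact add_mem (Ideal.mul_mem_left _ _ (base_mem k)) ih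
  | pred n ih =>
      have hadd : ((2 * (-(n : ℤ)), -(-(n : ℤ)), 0) : M k)
          = (2 * (-(n : ℤ) - 1), -(-(n : ℤ) - 1), 0) + (2, -1, 0) := by
        refine Prod.ext ?_ (Prod.ext ?_ ?_) <;> simp <;> ring
      rw [hadd, step_eq] at ih
      have key : AddMonoidAlgebra.single ((2 * (-(n : ℤ) - 1), -(-(n : ℤ) - 1), 0) : M k)
          (1 : ℤ) - 1
          = (AddMonoidAlgebra.single ((2 * (-(n : ℤ) - 1), -(-(n : ℤ) - 1), 0) : M k) 1 *
              (AddMonoidAlgebra.single ((2, -1, 0) : M k) 1 - 1) +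
            (AddMonoidAlgebra.single ((2 * (-(n : ℤ) - 1), -(-(n : ℤ) - 1), 0) : M k) (1 : ℤ)
              - 1))
            - AddMonoidAlgebra.single ((2 * (-(n : ℤ) - 1), -(-(n : ℤ) - 1), 0) : M k) 1 *
              (AddMonoidAlgebra.single ((2, -1, 0) : M k) 1 - 1) := by ring
      rw [key]
      exact sub_mem ih (Ideal.mul_mem_left _ _ (base_mem k))

lemma pair_mem (k : ℕ) (m m' : M k) (h : gh k m = gh k m') (c : ℤ) :
    AddMonoidAlgebra.single m c - AddMonoidAlgebra.single m' c ∈ Ideal.span {gen k} := by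
  have hh : ((m.1 + 2 * m.2.1, m.2.2) : ℤ × (Fin k → ℤ))
      = (m'.1 + 2 * m'.2.1, m'.2.2) := h
  have h1 : m.1 + 2 * m.2.1 = m'.1 + 2 * m'.2.1 := (Prod.ext_iff.mp hh).1
  have h2 : m.2.2 = m'.2.2 := (Prod.ext_iff.mp hh).2
  set t : ℤ := m'.2.1 - m.2.1 with ht
  have hm : m = m' + ((2 * t, -t, 0) : M k) := by
    refine Prod.ext ?_ (Prod.ext ?_ ?_)
    · simp only [Prod.fst_add]; omega
    · simp only [Prod.snd_add, Prod.fst_add]; omega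
    · simpa using h2
  have key : AddMonoidAlgebra.single m c - AddMonoidAlgebra.single m' c
      = AddMonoidAlgebra.single m' c *
        (AddMonoidAlgebra.single ((2 * t, -t, 0) : M k) 1 - 1) := by
    rw [mul_sub, AddMonoidAlgebra.single_mul_single, mul_one, mul_one, hm, add_comm]
  rw [key]
  exact Ideal.mul_mem_left _ _ (pow_mem k t)

lemma ker_mem (k : ℕ) (n : ℕ) : ∀ f : AddMonoidAlgebra ℤ (M k), f.coeff.support.card ≤ n →
    Finsupp.mapDomain (gh k) f.coeff = 0 → f ∈ Ideal.span {gen k} := by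
  classical
  induction n with
  | zero =>
      intro f hf _
      have : f.coeff.support = ∅ := Finset.card_eq_zero.mp (Nat.le_zero.mp hf)
      have : f = 0 := AddMonoidAlgebra.coeff_injective (Finsupp.support_eq_empty.mp this)
      simp [this]
  | succ n ih =>
      intro f hcard hmap
      by_cases hf0 : f = 0
      · simp [hf0]
      obtain ⟨m, hm⟩ := Finsupp.support_nonempty_iff.mpr (fun h => hf0 (AddMonoidAlgebra.coeff_injective h))
      have hmne : f.coeff m ≠ 0 := Finsupp.mem_support_iff.mp hm
      set d := gh k m with hd
      -- fiber sum is zero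
      have hfiber : ∑ x ∈ f.coeff.support.filter (fun x => gh k x = d), f.coeff x = 0 := by
        have := congrFun (congrArg DFunLike.coe hmap) d
        rw [Finsupp.mapDomain, Finsupp.sum_apply] at this
        simp only [Finsupp.coe_zero, Pi.zero_apply] at this
        rw [← this]
        rw [Finsupp.sum]
        rw [Finset.sum_filter]
        apply Finset.sum_congr rfl
        intro x _
        rw [Finsupp.single_apply]
      -- find another point in the fiber
      have hmT : m ∈ f.coeff.support.filter (fun x => gh k x = d) :=
        Finset.mem_filter.mpr ⟨hm, rfl⟩
      obtain ⟨m', hm'T, hm'ne⟩ :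
          ∃ m' ∈ f.coeff.support.filter (fun x => gh k x = d), m' ≠ m := by
        by_contra hcon
        push_neg at hcon
        have : f.coeff.support.filter (fun x => gh k x = d) = {m} :=
          Finset.eq_singleton_iff_unique_mem.mpr ⟨hmT, hcon⟩
        rw [this, Finset.sum_singleton] at hfiber
        exact hmne hfiber
      have hm's : m' ∈ f.coeff.support := (Finset.mem_filter.mp hm'T).1
      have hghm' : gh k m' = d := (Finset.mem_filter.mp hm'T).2
      set c := f.coeff m with hc
      set e : AddMonoidAlgebra ℤ (M k) :=
        AddMonoidAlgebra.single m c - AddMonoidAlgebra.single m' c with he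
      have hemem : e ∈ Ideal.span {gen k} := pair_mem k m m' (by rw [hghm']) c
      have hmape : Finsupp.mapDomain (gh k) e.coeff = 0 := by
        rw [he, AddMonoidAlgebra.coeff_sub, mapDomain_sub', AddMonoidAlgebra.coeff_single,
          AddMonoidAlgebra.coeff_single, Finsupp.mapDomain_single, Finsupp.mapDomain_single,
          ← hd, hghm', sub_self]
      have hsub : (f - e).coeff.support ⊆ f.coeff.support.erase m := by
        intro x hx
        have hxne : (f - e).coeff x ≠ 0 := Finsupp.mem_support_iff.mp hx
        rw [AddMonoidAlgebra.coeff_sub, Finsupp.sub_apply, he, AddMonoidAlgebra.coeff_sub,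
          Finsupp.sub_apply, AddMonoidAlgebra.coeff_single, AddMonoidAlgebra.coeff_single,
          Finsupp.single_apply, Finsupp.single_apply] at hxne
        rcases eq_or_ne x m with rfl | hxm
        · simp [hm'ne, ← hc] at hxne
        · refine Finset.mem_erase.mpr ⟨hxm, ?_⟩
          rcases eq_or_ne x m' with rfl | hxm'
          · exact hm's
          · rw [if_neg (by exact fun h => hxm h.symm), if_neg (by exact fun h => hxm' h.symm)]
              at hxne
            simpa [Finsupp.mem_support_iff] using by simpa using hxne
      have hcard' : (f - e).coeff.support.card ≤ n := by
        have h1 : (f - e).coeff.support.card ≤ (f.coeff.support.erase m).card := Finset.card_le_card hsub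
        have h2 : (f.coeff.support.erase m).card = f.coeff.support.card - 1 := Finset.card_erase_of_mem hm
        omega
      have hmap' : Finsupp.mapDomain (gh k) (f - e).coeff = 0 := by
        rw [AddMonoidAlgebra.coeff_sub, mapDomain_sub', hmap, hmape, sub_zero]
      have := ih (f - e) hcard' hmap'
      have : f = (f - e) + e := by ring
      rw [this]
      exact add_mem (ih (f - e) hcard' hmap') hemem

lemma D_add (k : ℕ) (f g : AddMonoidAlgebra ℚ (M k)) : D k (f + g) = D k f + D k g := by
  unfold D
  rw [AddMonoidAlgebra.coeff_add]
  apply Finsupp.sum_add_index <;> intros <;> simp [mul_add, AddMonoidAlgebra.single_add]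

/-- the induced Euler operator downstairs. -/
noncomputable def E (k : ℕ) (h : AddMonoidAlgebra ℚ (ℤ × (Fin k → ℤ))) :
    AddMonoidAlgebra ℚ (ℤ × (Fin k → ℤ)) :=
  Finsupp.sum h.coeff fun d c => AddMonoidAlgebra.single d ((d.1 : ℚ) / 2 * c)

lemma E_add (k : ℕ) (f g : AddMonoidAlgebra ℚ (ℤ × (Fin k → ℤ))) :
    E k (f + g) = E k f + E k g := by
  unfold E
  rw [AddMonoidAlgebra.coeff_add]
  apply Finsupp.sum_add_index <;> intros <;> simp [mul_add, AddMonoidAlgebra.single_add]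

lemma mapD (k : ℕ) (f : AddMonoidAlgebra ℚ (M k)) :
    AddMonoidAlgebra.mapDomain (gh k) (D k f) = E k (AddMonoidAlgebra.mapDomain (gh k) f) := by
  induction f using AddMonoidAlgebra.induction_linear with
  | zero => simp [D, E]
  | add f g hf hg =>
      rw [D_add, AddMonoidAlgebra.mapDomain_add, AddMonoidAlgebra.mapDomain_add, E_add, hf, hg]
  | single m c =>
      rw [D, AddMonoidAlgebra.coeff_single, Finsupp.sum_single_index (by simp),
        AddMonoidAlgebra.mapDomain_single, AddMonoidAlgebra.mapDomain_single, E,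
        AddMonoidAlgebra.coeff_single, Finsupp.sum_single_index (by simp)]
      congr 1
      show ((m.1 : ℚ) / 2 + (m.2.1 : ℚ)) * c = (((m.1 + 2 * m.2.1 : ℤ) : ℚ)) / 2 * c
      push_cast
      ring

lemma E_apply (k : ℕ) (h : AddMonoidAlgebra ℚ (ℤ × (Fin k → ℤ))) (d : ℤ × (Fin k → ℤ)) :
    (E k h).coeff d = (d.1 : ℚ) / 2 * h.coeff d := by
  induction h using AddMonoidAlgebra.induction_linear with
  | zero => simp [E]
  | add f g hf hg =>
      rw [E_add, AddMonoidAlgebra.coeff_add, Finsupp.add_apply, hf, hg, AddMonoidAlgebra.coeff_add,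
        Finsupp.add_apply]; ring
  | single d' c =>
      rw [E, AddMonoidAlgebra.coeff_single, Finsupp.sum_single_index (by simp),
        AddMonoidAlgebra.coeff_single, Finsupp.single_apply, Finsupp.single_apply]
      split
      · simp_all
      · simp

/-- if all `x₁`-exponents of `f` are half-integers (i.e. all
`t`-exponents are odd), all other exponents being integers, and
`x₁∂f/∂x₁ + y₁∂f/∂y₁ ∈ (x₁ − y₁)`, then `f` is divisible by `x₁ − y₁`. -/
theorem statement17 (k : ℕ) (f : AddMonoidAlgebra ℤ (M k))
    (hhalf : ∀ m ∈ f.coeff.support, Odd m.1)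
    (hD : D k (AddMonoidAlgebra.ofCoeff (Finsupp.mapRange (Int.cast : ℤ → ℚ) (by simp) f.coeff)) ∈ Ideal.span {genQ k}) :
    f ∈ Ideal.span {gen k} := by
  classical
  set fQ := AddMonoidAlgebra.ofCoeff (Finsupp.mapRange (Int.cast : ℤ → ℚ) (by simp) f.coeff) with hfQ
  -- step 1: mapDomain of D fQ is 0
  rw [Ideal.mem_span_singleton'] at hD
  obtain ⟨r, hr⟩ := hD
  have hφgen : AddMonoidAlgebra.mapDomain (gh k) (genQ k) = 0 := by
    show AddMonoidAlgebra.mapDomainRingHom ℚ (gh k) (genQ k) = 0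
    rw [genQ, map_sub]
    norm_num [gh]
  have hφD : AddMonoidAlgebra.mapDomain (gh k) (D k fQ) = 0 := by
    have h1 : (AddMonoidAlgebra.mapDomainRingHom ℚ (gh k)) (D k fQ) = 0 := by
      rw [← hr, map_mul]
      have h2 : (AddMonoidAlgebra.mapDomainRingHom ℚ (gh k)) (genQ k) = 0 := hφgen
      rw [h2, mul_zero]
    exact h1
  -- step 2: fiber sums vanish
  have hEh : E k (AddMonoidAlgebra.mapDomain (gh k) fQ) = 0 := by rw [← mapD, hφD]
  have hh0 : AddMonoidAlgebra.mapDomain (gh k) fQ = 0 := by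
    ext d
    have hE := congrArg (fun x => x.coeff d) hEh
    rw [E_apply] at hE
    simp only [AddMonoidAlgebra.coeff_zero, Finsupp.coe_zero, Pi.zero_apply] at hE
    rcases eq_or_ne ((AddMonoidAlgebra.mapDomain (gh k) fQ).coeff d) 0 with h0 | h0
    · simpa using h0
    · exfalso
      have hds : d ∈ (AddMonoidAlgebra.mapDomain (gh k) fQ).coeff.support := Finsupp.mem_support_iff.mpr h0
      have := Finsupp.mapDomain_support hds
      obtain ⟨m, hms, hmd⟩ := Finset.mem_image.mp this
      have hmf : m ∈ f.coeff.support := by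
        have := Finsupp.support_mapRange (f := (Int.cast : ℤ → ℚ)) (hf := by simp) (g := f.coeff) hms
        simpa using this
      have hodd : Odd m.1 := hhalf m hmf
      have hd1 : d.1 = m.1 + 2 * m.2.1 := by rw [← hmd]; rfl
      have hd1odd : Odd d.1 := by rw [hd1]; rcases hodd with ⟨j, hj⟩; exact ⟨j + m.2.1, by omega⟩
      have hd1ne : d.1 ≠ 0 := by rintro h; rw [h] at hd1odd; simpa using hd1odd
      have : (d.1 : ℚ) / 2 ≠ 0 := by
        simp only [ne_eq, div_eq_zero_iff]
        push_neg
        exact ⟨Int.cast_ne_zero.mpr hd1ne, by norm_num⟩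
      exact h0 (by
        rcases mul_eq_zero.mp hE with h | h
        · exact absurd h this
        · exact h)
  -- step 3: transfer to ℤ
  have hZ : Finsupp.mapDomain (gh k) f.coeff = 0 := by
    have := Finsupp.mapDomain_mapRange (gh k) f.coeff (Int.cast : ℤ → ℚ) (by simp)
      (fun x y => by push_cast; ring)
    replace hh0 : Finsupp.mapDomain (gh k) fQ.coeff = 0 := congrArg AddMonoidAlgebra.coeff hh0
    rw [hfQ, AddMonoidAlgebra.coeff_ofCoeff, this] at hh0
    ext d
    have hx := congrFun (congrArg DFunLike.coe hh0) d
    rw [Finsupp.mapRange_apply] at hx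
    simp only [Finsupp.coe_zero, Pi.zero_apply] at hx ⊢
    exact_mod_cast hx
  exact ker_mem k f.coeff.support.card f le_rfl hZ

end Stmt17
end
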